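/- arXiv:0812.4364 — 3 statements merged into one kernel-verified Lean document; each statement's English description precedes it below -/
import Mathlib

section
/- The action functional S_L is well defined and continuously Fréchet differentiable on 𝒪, and its Fréchet differential at γ = (x,w) ∈ 𝒪 is the bounded linear functional ξ ↦ DS_L(γ)[ξ] = ∫₀¹ ( ∂L/∂q(t,γ_{x,w}(t),w(t))·ξ(t) + ∂L/∂v(t,γ_{x,w}(t),w(t))·z(t) ) dt, where ξ = (y,z) ∈ H and ξ(t) = y + ∫₀^t z(s) ds. -/
open MeasureTheory Set Filter Topology ContDiff
open scoped RealInnerProductSpace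

noncomputable section

/-- Euclidean space `ℝ^n`. -/
abbrev E (n : ℕ) : Type := EuclideanSpace ℝ (Fin n)

/-- Lebesgue measure restricted to the interval `[0,1]`. -/
abbrev μ01 : Measure ℝ := volume.restrict (Set.Icc (0:ℝ) 1)

instance : IsFiniteMeasure μ01 :=
  ⟨by rw [Measure.restrict_apply_univ]; simp [Real.volume_Icc]⟩

/-- The Hilbert space `H = ℝ^n × L²([0,1],ℝ^n)`, the standard model of `H¹([0,1],ℝ^n)`
via `u ↦ (u 0, u')`. -/
abbrev Hsp (n : ℕ) : Type := E n × Lp (E n) 2 μ01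

variable {n : ℕ}

/-- The absolutely continuous path associated to `(x,w) ∈ H`:  `t ↦ x + ∫_0^t w(s) ds`. -/
def pathH (p : Hsp n) : ℝ → E n :=
  fun t => p.1 + ∫ s in Set.Ioc (0:ℝ) t, p.2 s ∂μ01

/-- The open set `𝒪 ⊆ H` of those `(x,w)` whose path stays in `U`. -/
def actO (U : Set (E n)) : Set (Hsp n) :=
  {p | ∀ t ∈ Set.Icc (0:ℝ) 1, pathH p t ∈ U}

/-- The Lagrangian action functional `S_L`. -/
def action (L : ℝ → E n → E n → ℝ) (p : Hsp n) : ℝ :=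
  ∫ t, L t (pathH p t) (p.2 t) ∂μ01

/-- The first differential of the action functional:
`DS_L(p)[ξ] = ∫_0^1 ( ∂L/∂q · ξ + ∂L/∂v · ξ' ) dt`. -/
def dAct (Lq Lv : ℝ → E n → E n → E n) (p ξ : Hsp n) : ℝ :=
  ∫ t, (⟪Lq t (pathH p t) (p.2 t), pathH ξ t⟫ + ⟪Lv t (pathH p t) (p.2 t), ξ.2 t⟫) ∂μ01

/-- The second Gateaux differential of the action functional:
`d²S_L(p)[ξ,η] = ∫_0^1 ( ∂²L/∂v² ξ'·η' + ∂²L/∂v∂q ξ'·η + ∂²L/∂q∂v ξ·η' + ∂²L/∂q² ξ·η ) dt`. -/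
def d2Act (Lvv Lqv Lqq : ℝ → E n → E n → (E n →L[ℝ] E n)) (p ξ η : Hsp n) : ℝ :=
  ∫ t, (⟪Lvv t (pathH p t) (p.2 t) (ξ.2 t), η.2 t⟫
      + ⟪Lqv t (pathH p t) (p.2 t) (pathH ξ t), η.2 t⟫
      + ⟪Lqv t (pathH p t) (p.2 t) (pathH η t), ξ.2 t⟫
      + ⟪Lqq t (pathH p t) (p.2 t) (pathH ξ t), pathH η t⟫) ∂μ01

/-- The `H`-inner product `⟨(x,w),(y,z)⟩ = x·y + ⟨w,z⟩_{L²}`. -/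
def innH (p q : Hsp n) : ℝ := ⟪p.1, q.1⟫ + ⟪p.2, q.2⟫

lemma pathH_add (p q : Hsp n) (t : ℝ) (_ht : t ∈ Set.Icc (0:ℝ) 1) :
    pathH (p + q) t = pathH p t + pathH q t := by
  have hint : ∀ r : Hsp n, Integrable (r.2 : ℝ → E n) (μ01.restrict (Set.Ioc (0:ℝ) t)) :=
    fun r => ((Lp.memLp r.2).integrable (by norm_num)).restrict
  have h1 : (((p + q).2 : Lp (E n) 2 μ01) : ℝ → E n)
      =ᵐ[μ01.restrict (Set.Ioc (0:ℝ) t)] fun s => p.2 s + q.2 s :=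
    ae_restrict_of_ae (Lp.coeFn_add p.2 q.2)
  have h2 : ∫ s in Set.Ioc (0:ℝ) t, (p + q).2 s ∂μ01
      = (∫ s in Set.Ioc (0:ℝ) t, p.2 s ∂μ01) + ∫ s in Set.Ioc (0:ℝ) t, q.2 s ∂μ01 := by
    rw [integral_congr_ae h1]
    exact integral_add (hint p) (hint q)
  simp only [pathH, Prod.fst_add, h2]
  abel

lemma pathH_smul (c : ℝ) (p : Hsp n) (t : ℝ) (_ht : t ∈ Set.Icc (0:ℝ) 1) :
    pathH (c • p) t = c • pathH p t := by
  have h1 : (((c • p).2 : Lp (E n) 2 μ01) : ℝ → E n)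
      =ᵐ[μ01.restrict (Set.Ioc (0:ℝ) t)] fun s => c • (p.2 s) :=
    ae_restrict_of_ae (Lp.coeFn_smul c p.2)
  have h2 : ∫ s in Set.Ioc (0:ℝ) t, (c • p).2 s ∂μ01
      = c • ∫ s in Set.Ioc (0:ℝ) t, p.2 s ∂μ01 := by
    rw [integral_congr_ae h1]
    exact integral_smul c _
  simp only [pathH, Prod.smul_fst, h2, smul_add]

lemma pathH_zero (t : ℝ) (_ht : t ∈ Set.Icc (0:ℝ) 1) : pathH (0 : Hsp n) t = 0 := by
  have h1 : (((0 : Hsp n).2 : Lp (E n) 2 μ01) : ℝ → E n)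
      =ᵐ[μ01.restrict (Set.Ioc (0:ℝ) t)] fun _ => (0 : E n) :=
    ae_restrict_of_ae (Lp.coeFn_zero (E n) 2 μ01)
  simp only [pathH]
  rw [integral_congr_ae h1]
  simp

/-- The closed subspace `H_W = {(x,w) : (γ(0),γ(1)) ∈ W}` of `H`. -/
def HWsub (W : Submodule ℝ (E n × E n)) : Submodule ℝ (Hsp n) where
  carrier := {p | (pathH p 0, pathH p 1) ∈ W}
  add_mem' := by
    intro p q hp hq
    simp only [Set.mem_setOf_eq] at *
    rw [pathH_add p q 0 (by norm_num), pathH_add p q 1 (by norm_num)]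
    exact W.add_mem hp hq
  zero_mem' := by
    simp only [Set.mem_setOf_eq]
    rw [pathH_zero 0 (by norm_num), pathH_zero 1 (by norm_num)]
    exact W.zero_mem
  smul_mem' := by
    intro c p hp
    simp only [Set.mem_setOf_eq] at *
    rw [pathH_smul c p 0 (by norm_num), pathH_smul c p 1 (by norm_num)]
    exact W.smul_mem c hp

/-- The auxiliary inner product `⟨ξ,η⟩₀ = ∫ ∂²L/∂v²(t,0,0) ξ'·η' dt + ∫ ξ·η dt` on `H_W`. -/
def inn0 (Lvv : ℝ → E n → E n → (E n →L[ℝ] E n)) (ξ η : Hsp n) : ℝ :=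
  (∫ t, ⟪Lvv t 0 0 (ξ.2 t), η.2 t⟫ ∂μ01) + ∫ t, ⟪pathH ξ t, pathH η t⟫ ∂μ01

end

/-!
Fix `p ∈ 𝒪`. Compactness of `γ_p([0,1])` gives a tube of radius `δ` around the path inside `U`,
and joint continuity bounds `L`, `∂L/∂q`, `∂L/∂v` at velocity `0` along it. With (L1') this gives
`|L|, |∂L/∂q| ≲ (1 + |v|)²` and `|∂L/∂v| ≲ 1 + |v|` along the path, so `S_L(p)` is finite and
`DS_L(p)` is a bounded functional. For a variation `ξ` with `2‖ξ‖ ≤ δ` (note `|ξ(t)| ≤ 2‖ξ‖`),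
the mean value inequality and (L1') give pointwise, with `a = 1 + |p'| + |ξ'|` and
`m = 2‖ξ‖ a + |ξ'|`,
  `|L(p + ξ) - L(p) - ∂_q L · ξ - ∂_v L · ξ'| ≤ ℓ m²`, `|Δ ∂_q L| ≤ ℓ a m`, `|Δ ∂_v L| ≤ ℓ m`,
while `‖m‖_{L²} ≲ ‖ξ‖`. Integrating, the Taylor remainder of `S_L` is `O(‖ξ‖²)`, and by
Cauchy–Schwarz `‖DS_L(p + ξ) - DS_L(p)‖ = O(‖ξ‖)`.
-/

noncomputable section

open MeasureTheory Set Filter Topology Metric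
open scoped RealInnerProductSpace

section MeanValue

variable {F G : Type*} [NormedAddCommGroup F] [NormedAddCommGroup G] [NormedSpace ℝ G]

theorem norm_add_sub_le_of_fderiv_closedBall [NormedSpace ℝ F] {f : F → G} {x h : F} {C : ℝ}
    (hf : ∀ y ∈ closedBall x ‖h‖, DifferentiableAt ℝ f y)
    (hC : ∀ y ∈ closedBall x ‖h‖, ‖fderiv ℝ f y‖ ≤ C) :
    ‖f (x + h) - f x‖ ≤ C * ‖h‖ := by
  simpa using (convex_closedBall x ‖h‖).norm_image_sub_le_of_norm_fderiv_le (y := x + h) hf hC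
    (mem_closedBall_self (norm_nonneg h)) (by simp)

theorem abs_add_sub_sub_inner_le_of_gradient_closedBall [InnerProductSpace ℝ F] [CompleteSpace F]
    {f : F → ℝ}
    {f' : F → F} {x h : F} {C : ℝ} (hf : ∀ y ∈ closedBall x ‖h‖, HasGradientAt f (f' y) y)
    (hC : ∀ y ∈ closedBall x ‖h‖, ‖f' y - f' x‖ ≤ C) :
    |f (x + h) - f x - ⟪f' x, h⟫| ≤ C * ‖h‖ := by
  have := (convex_closedBall x ‖h‖).norm_image_sub_le_of_norm_hasFDerivWithin_le' (y := x + h)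
    (φ := InnerProductSpace.toDual ℝ F (f' x))
    (fun y hy => (hf y hy).hasFDerivAt.hasFDerivWithinAt)
    (fun y hy => by rw [← map_sub, LinearIsometryEquiv.norm_map]; exact hC y hy)
    (mem_closedBall_self (norm_nonneg h)) (by simp)
  simpa [InnerProductSpace.toDual_apply_apply] using this

end MeanValue

/-- Condition (L1') of the paper, at a fixed time. -/
structure IsL1Lagrangian {F : Type*} [NormedAddCommGroup F] [InnerProductSpace ℝ F]
    [CompleteSpace F] (U : Set F) (L : F → F → ℝ) (Lq Lv : F → F → F) (ℓ : ℝ) : Prop where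
  hasGradientAt_q : ∀ q ∈ U, ∀ v, HasGradientAt (L · v) (Lq q v) q
  hasGradientAt_v : ∀ q ∈ U, ∀ v, HasGradientAt (L q ·) (Lv q v) v
  bound_vv : ∀ q ∈ U, ∀ v, DifferentiableAt ℝ (Lv q ·) v ∧ ‖fderiv ℝ (Lv q ·) v‖ ≤ ℓ
  bound_qv : ∀ q ∈ U, ∀ v, DifferentiableAt ℝ (Lv · v) q ∧ ‖fderiv ℝ (Lv · v) q‖ ≤ ℓ * (1 + ‖v‖)
  bound_vq : ∀ q ∈ U, ∀ v, DifferentiableAt ℝ (Lq q ·) v ∧ ‖fderiv ℝ (Lq q ·) v‖ ≤ ℓ * (1 + ‖v‖)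
  bound_qq : ∀ q ∈ U, ∀ v,
    DifferentiableAt ℝ (Lq · v) q ∧ ‖fderiv ℝ (Lq · v) q‖ ≤ ℓ * (1 + ‖v‖ ^ 2)

theorem IsL1Lagrangian.of_hasFDerivAt {F : Type*} [NormedAddCommGroup F]
    [InnerProductSpace ℝ F] [CompleteSpace F] {U : Set F} {L : F → F → ℝ} {Lq Lv : F → F → F}
    {Lvv Lqv Lvq Lqq : F → F → F →L[ℝ] F} {ℓ : ℝ}
    (hLq : ∀ q ∈ U, ∀ v, HasGradientAt (L · v) (Lq q v) q)
    (hLv : ∀ q ∈ U, ∀ v, HasGradientAt (L q ·) (Lv q v) v)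
    (hLvv : ∀ q ∈ U, ∀ v, HasFDerivAt (Lv q ·) (Lvv q v) v)
    (hLqv : ∀ q ∈ U, ∀ v, HasFDerivAt (Lv · v) (Lqv q v) q)
    (hLvq : ∀ q ∈ U, ∀ v, HasFDerivAt (Lq q ·) (Lvq q v) v)
    (hLqq : ∀ q ∈ U, ∀ v, HasFDerivAt (Lq · v) (Lqq q v) q)
    (hbound : ∀ q ∈ U, ∀ v, ‖Lvv q v‖ ≤ ℓ ∧ ‖Lqv q v‖ ≤ ℓ * (1 + ‖v‖) ∧
      ‖Lvq q v‖ ≤ ℓ * (1 + ‖v‖) ∧ ‖Lqq q v‖ ≤ ℓ * (1 + ‖v‖ ^ 2)) :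
    IsL1Lagrangian U L Lq Lv ℓ where
  hasGradientAt_q := hLq
  hasGradientAt_v := hLv
  bound_vv q hq v := ⟨(hLvv q hq v).differentiableAt, (hLvv q hq v).fderiv ▸ (hbound q hq v).1⟩
  bound_qv q hq v := ⟨(hLqv q hq v).differentiableAt, (hLqv q hq v).fderiv ▸ (hbound q hq v).2.1⟩
  bound_vq q hq v :=
    ⟨(hLvq q hq v).differentiableAt, (hLvq q hq v).fderiv ▸ (hbound q hq v).2.2.1⟩
  bound_qq q hq v :=
    ⟨(hLqq q hq v).differentiableAt, (hLqq q hq v).fderiv ▸ (hbound q hq v).2.2.2⟩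

namespace IsL1Lagrangian

variable {F : Type*} [NormedAddCommGroup F] [InnerProductSpace ℝ F] [CompleteSpace F]
  {U : Set F} {L : F → F → ℝ} {Lq Lv : F → F → F} {ℓ : ℝ} (h : IsL1Lagrangian U L Lq Lv ℓ)
  {q y : F}
include h

theorem nonneg (hq : q ∈ U) : 0 ≤ ℓ :=
  (norm_nonneg _).trans (h.bound_vv q hq 0).2

theorem norm_Lv_vel_sub_le (hq : q ∈ U) (v z : F) : ‖Lv q (v + z) - Lv q v‖ ≤ ℓ * ‖z‖ :=
  norm_add_sub_le_of_fderiv_closedBall (fun w _ => (h.bound_vv q hq w).1)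
    (fun w _ => (h.bound_vv q hq w).2)

theorem norm_Lq_vel_sub_le (hq : q ∈ U) (v z : F) :
    ‖Lq q (v + z) - Lq q v‖ ≤ ℓ * (1 + ‖v‖ + ‖z‖) * ‖z‖ :=
  norm_add_sub_le_of_fderiv_closedBall (fun w _ => (h.bound_vq q hq w).1) fun w hw =>
    (h.bound_vq q hq w).2.trans <| mul_le_mul_of_nonneg_left
      (by linarith [norm_le_of_mem_closedBall hw]) (h.nonneg hq)

theorem norm_Lv_pos_sub_le (hball : closedBall q ‖y‖ ⊆ U) (v : F) :
    ‖Lv (q + y) v - Lv q v‖ ≤ ℓ * (1 + ‖v‖) * ‖y‖ :=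
  norm_add_sub_le_of_fderiv_closedBall (fun w hw => (h.bound_qv w (hball hw) v).1)
    (fun w hw => (h.bound_qv w (hball hw) v).2)

theorem norm_Lq_pos_sub_le (hball : closedBall q ‖y‖ ⊆ U) (v : F) :
    ‖Lq (q + y) v - Lq q v‖ ≤ ℓ * (1 + ‖v‖ ^ 2) * ‖y‖ :=
  norm_add_sub_le_of_fderiv_closedBall (fun w hw => (h.bound_qq w (hball hw) v).1)
    (fun w hw => (h.bound_qq w (hball hw) v).2)

theorem abs_L_vel_taylor_le (hq : q ∈ U) (v z : F) :
    |L q (v + z) - L q v - ⟪Lv q v, z⟫| ≤ ℓ * ‖z‖ ^ 2 := by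
  have := abs_add_sub_sub_inner_le_of_gradient_closedBall (C := ℓ * ‖z‖)
    (fun w _ => h.hasGradientAt_v q hq w) fun w hw => by
      simpa using (h.norm_Lv_vel_sub_le hq v (w - v)).trans
        (mul_le_mul_of_nonneg_left (mem_closedBall_iff_norm.1 hw) (h.nonneg hq))
  rwa [mul_assoc, ← sq] at this

theorem abs_L_pos_taylor_le (hball : closedBall q ‖y‖ ⊆ U) (v : F) :
    |L (q + y) v - L q v - ⟪Lq q v, y⟫| ≤ ℓ * (1 + ‖v‖ ^ 2) * ‖y‖ ^ 2 := by
  have hℓ := h.nonneg (hball (mem_closedBall_self (norm_nonneg y)))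
  have := abs_add_sub_sub_inner_le_of_gradient_closedBall (f := (L · v))
    (C := ℓ * (1 + ‖v‖ ^ 2) * ‖y‖) (fun w hw => h.hasGradientAt_q w (hball hw) v) fun w hw => by
      have hw' := mem_closedBall_iff_norm.1 hw
      simpa using (h.norm_Lq_pos_sub_le ((closedBall_subset_closedBall hw').trans hball) v).trans
        (mul_le_mul_of_nonneg_left hw' (by positivity))
  rwa [mul_assoc, ← sq] at this

theorem norm_Lv_sub_le (hball : closedBall q ‖y‖ ⊆ U) (v z : F) :
    ‖Lv (q + y) (v + z) - Lv q v‖ ≤ ℓ * ((1 + ‖v‖ + ‖z‖) * ‖y‖ + ‖z‖) := by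
  have hq := hball (mem_closedBall_self (norm_nonneg y))
  have hℓ := h.nonneg hq
  have hvz := norm_add_le v z
  calc ‖Lv (q + y) (v + z) - Lv q v‖
      ≤ ‖Lv (q + y) (v + z) - Lv q (v + z)‖ + ‖Lv q (v + z) - Lv q v‖ :=
        norm_sub_le_norm_sub_add_norm_sub _ _ _
    _ ≤ ℓ * (1 + ‖v + z‖) * ‖y‖ + ℓ * ‖z‖ :=
        add_le_add (h.norm_Lv_pos_sub_le hball _) (h.norm_Lv_vel_sub_le hq v z)
    _ ≤ ℓ * (1 + ‖v‖ + ‖z‖) * ‖y‖ + ℓ * ‖z‖ := by gcongr ℓ * ?_ * _ + _; linarith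
    _ = ℓ * ((1 + ‖v‖ + ‖z‖) * ‖y‖ + ‖z‖) := by ring

theorem norm_Lq_sub_le (hball : closedBall q ‖y‖ ⊆ U) (v z : F) :
    ‖Lq (q + y) (v + z) - Lq q v‖
      ≤ ℓ * (1 + ‖v‖ + ‖z‖) * ((1 + ‖v‖ + ‖z‖) * ‖y‖ + ‖z‖) := by
  have hq := hball (mem_closedBall_self (norm_nonneg y))
  have hℓ := h.nonneg hq
  have hvz : 1 + ‖v + z‖ ^ 2 ≤ (1 + ‖v‖ + ‖z‖) ^ 2 := by
    nlinarith [norm_add_le v z, norm_nonneg (v + z), norm_nonneg v, norm_nonneg z]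
  calc ‖Lq (q + y) (v + z) - Lq q v‖
      ≤ ‖Lq (q + y) (v + z) - Lq q (v + z)‖ + ‖Lq q (v + z) - Lq q v‖ :=
        norm_sub_le_norm_sub_add_norm_sub _ _ _
    _ ≤ ℓ * (1 + ‖v + z‖ ^ 2) * ‖y‖ + ℓ * (1 + ‖v‖ + ‖z‖) * ‖z‖ :=
        add_le_add (h.norm_Lq_pos_sub_le hball _) (h.norm_Lq_vel_sub_le hq v z)
    _ ≤ ℓ * (1 + ‖v‖ + ‖z‖) ^ 2 * ‖y‖ + ℓ * (1 + ‖v‖ + ‖z‖) * ‖z‖ := by gcongr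
    _ = ℓ * (1 + ‖v‖ + ‖z‖) * ((1 + ‖v‖ + ‖z‖) * ‖y‖ + ‖z‖) := by ring

theorem abs_L_taylor_le (hball : closedBall q ‖y‖ ⊆ U) (v z : F) :
    |L (q + y) (v + z) - L q v - (⟪Lq q v, y⟫ + ⟪Lv q v, z⟫)|
      ≤ ℓ * ((1 + ‖v‖ + ‖z‖) * ‖y‖ + ‖z‖) ^ 2 := by
  have hq := hball (mem_closedBall_self (norm_nonneg y))
  have hℓ := h.nonneg hq
  have hvz : 1 + ‖v + z‖ ^ 2 ≤ (1 + ‖v‖ + ‖z‖) ^ 2 := by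
    nlinarith [norm_add_le v z, norm_nonneg (v + z), norm_nonneg v, norm_nonneg z]
  have hmixed : |⟪Lq q (v + z) - Lq q v, y⟫| ≤ ℓ * (1 + ‖v‖ + ‖z‖) * ‖z‖ * ‖y‖ :=
    (abs_real_inner_le_norm _ _).trans (by gcongr; exact h.norm_Lq_vel_sub_le hq v z)
  have hsplit : L (q + y) (v + z) - L q v - (⟪Lq q v, y⟫ + ⟪Lv q v, z⟫)
      = (L (q + y) (v + z) - L q (v + z) - ⟪Lq q (v + z), y⟫) + ⟪Lq q (v + z) - Lq q v, y⟫
        + (L q (v + z) - L q v - ⟪Lv q v, z⟫) := by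
    rw [inner_sub_left]; ring
  rw [hsplit]
  calc _ ≤ ℓ * (1 + ‖v + z‖ ^ 2) * ‖y‖ ^ 2 + ℓ * (1 + ‖v‖ + ‖z‖) * ‖z‖ * ‖y‖ + ℓ * ‖z‖ ^ 2 :=
        (abs_add_three _ _ _).trans (add_le_add_three (h.abs_L_pos_taylor_le hball _) hmixed
          (h.abs_L_vel_taylor_le hq v z))
    _ ≤ ℓ * (1 + ‖v‖ + ‖z‖) ^ 2 * ‖y‖ ^ 2 + 2 * ℓ * (1 + ‖v‖ + ‖z‖) * ‖z‖ * ‖y‖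
        + ℓ * ‖z‖ ^ 2 := by gcongr; linarith
    _ = ℓ * ((1 + ‖v‖ + ‖z‖) * ‖y‖ + ‖z‖) ^ 2 := by ring

theorem norm_Lv_le (hq : q ∈ U) (v : F) : ‖Lv q v‖ ≤ (‖Lv q 0‖ + ℓ) * (1 + ‖v‖) := by
  have h1 := h.norm_Lv_vel_sub_le hq 0 v
  rw [zero_add] at h1
  have := norm_le_insert' (Lv q v) (Lv q 0)
  nlinarith [h.nonneg hq, norm_nonneg v, norm_nonneg (Lv q 0)]

theorem norm_Lq_le (hq : q ∈ U) (v : F) : ‖Lq q v‖ ≤ (‖Lq q 0‖ + ℓ) * (1 + ‖v‖) ^ 2 := by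
  have h1 := h.norm_Lq_vel_sub_le hq 0 v
  rw [zero_add, norm_zero, add_zero] at h1
  have := norm_le_insert' (Lq q v) (Lq q 0)
  have hℓ := h.nonneg hq
  nlinarith [mul_nonneg hℓ (norm_nonneg v), mul_nonneg (norm_nonneg (Lq q 0)) (norm_nonneg v),
    mul_nonneg (mul_nonneg (norm_nonneg (Lq q 0)) (norm_nonneg v)) (norm_nonneg v)]

theorem abs_L_le (hq : q ∈ U) (v : F) :
    |L q v| ≤ (|L q 0| + ‖Lv q 0‖ + ℓ) * (1 + ‖v‖) ^ 2 := by
  have h1 := h.abs_L_vel_taylor_le hq 0 v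
  rw [zero_add] at h1
  have h2 : |⟪Lv q 0, v⟫| ≤ ‖Lv q 0‖ * ‖v‖ := abs_real_inner_le_norm _ _
  have h3 := abs_sub_abs_le_abs_sub (L q v) (L q 0)
  have h4 := abs_sub_le (L q v - L q 0) ⟪Lv q 0, v⟫ 0
  simp only [sub_zero] at h4
  nlinarith [h.nonneg hq, norm_nonneg v, norm_nonneg (Lv q 0), abs_nonneg (L q 0)]

end IsL1Lagrangian

section L2

variable {α : Type*} [MeasurableSpace α] {μ : Measure α}

theorem integral_norm_sq_eq_norm_sq {G : Type*} [NormedAddCommGroup G] [InnerProductSpace ℝ G]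
    (f : Lp G 2 μ) : ∫ a, ‖f a‖ ^ 2 ∂μ = ‖f‖ ^ 2 := by
  simp_rw [← real_inner_self_eq_norm_sq, L2.inner_def]

theorem integral_norm_le_norm {G : Type*} [NormedAddCommGroup G] [IsProbabilityMeasure μ]
    (f : Lp G 2 μ) : ∫ a, ‖f a‖ ∂μ ≤ ‖f‖ := by
  have hf := Lp.memLp f
  rw [integral_norm_eq_lintegral_enorm hf.1, ← eLpNorm_one_eq_lintegral_enorm, Lp.norm_def]
  exact ENNReal.toReal_mono hf.eLpNorm_ne_top
    (eLpNorm_le_eLpNorm_of_exponent_le one_le_two hf.1)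

theorem integral_mul_le_sqrt_mul_sqrt {f g : α → ℝ} (hf0 : 0 ≤ᵐ[μ] f) (hg0 : 0 ≤ᵐ[μ] g)
    (hf : MemLp f 2 μ) (hg : MemLp g 2 μ) :
    ∫ a, f a * g a ∂μ ≤ √(∫ a, f a ^ 2 ∂μ) * √(∫ a, g a ^ 2 ∂μ) := by
  have := integral_mul_le_Lp_mul_Lq_of_nonneg Real.HolderConjugate.two_two hf0 hg0
    (by simpa using hf) (by simpa using hg)
  simpa only [Real.rpow_two, ← Real.sqrt_eq_rpow] using this

end L2

instance : IsProbabilityMeasure μ01 :=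
  ⟨by rw [Measure.restrict_apply_univ]; simp [Real.volume_Icc]⟩

variable {n : ℕ}

theorem ae_mem_Icc : ∀ᵐ t ∂μ01, t ∈ Icc (0:ℝ) 1 :=
  ae_restrict_mem measurableSet_Icc

theorem continuousOn_pathH (p : Hsp n) : ContinuousOn (pathH p) (Icc 0 1) :=
  continuousOn_const.add <| intervalIntegral.continuousOn_primitive (μ := μ01)
    ((Lp.memLp p.2).integrable one_le_two).integrableOn

theorem aestronglyMeasurable_pathH (p : Hsp n) : AEStronglyMeasurable (pathH p) μ01 :=
  (continuousOn_pathH p).aestronglyMeasurable measurableSet_Icc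

theorem norm_pathH_le (η : Hsp n) (t : ℝ) : ‖pathH η t‖ ≤ 2 * ‖η‖ := by
  have hint : ‖∫ s in Ioc 0 t, η.2 s ∂μ01‖ ≤ ‖η.2‖ :=
    (norm_integral_le_integral_norm _).trans <|
      (setIntegral_le_integral ((Lp.memLp η.2).integrable one_le_two).norm
        (ae_of_all _ fun _ => norm_nonneg _)).trans (integral_norm_le_norm η.2)
  calc ‖pathH η t‖ ≤ ‖η.1‖ + ‖η.2‖ := (norm_add_le _ _).trans (by gcongr)
    _ ≤ 2 * ‖η‖ := by linarith [norm_fst_le η, norm_snd_le η]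

theorem ae_pathH_add (p ξ : Hsp n) : ∀ᵐ t ∂μ01, t ∈ Icc (0:ℝ) 1 ∧
    pathH (p + ξ) t = pathH p t + pathH ξ t ∧ (p + ξ).2 t = p.2 t + ξ.2 t := by
  filter_upwards [ae_mem_Icc, Lp.coeFn_add p.2 ξ.2] with t ht hw using
    ⟨ht, pathH_add p ξ t ht, hw⟩

/-- Dominates `a(t) |η(t)| + |η'(t)|`, since `|η(t)| ≤ 2‖η‖`. -/
def majorant (a : ℝ → ℝ) (η : Hsp n) (t : ℝ) : ℝ := 2 * ‖η‖ * a t + ‖η.2 t‖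

theorem memLp_majorant {a : ℝ → ℝ} (ha : MemLp a 2 μ01) (η : Hsp n) :
    MemLp (majorant a η) 2 μ01 :=
  (ha.const_mul _).add (Lp.memLp η.2).norm

theorem integral_majorant_sq_le {a : ℝ → ℝ} (ha : MemLp a 2 μ01) {K : ℝ}
    (hK : ∫ t, a t ^ 2 ∂μ01 ≤ K) (η : Hsp n) :
    ∫ t, majorant a η t ^ 2 ∂μ01 ≤ (8 * K + 2) * ‖η‖ ^ 2 := by
  have hz : Integrable (fun t => ‖η.2 t‖ ^ 2) μ01 := (Lp.memLp η.2).norm.integrable_sq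
  calc ∫ t, majorant a η t ^ 2 ∂μ01
      ≤ ∫ t, (8 * ‖η‖ ^ 2 * a t ^ 2 + 2 * ‖η.2 t‖ ^ 2) ∂μ01 := by
        refine integral_mono (memLp_majorant ha η).integrable_sq
          ((ha.integrable_sq.const_mul _).add (hz.const_mul _)) fun t => ?_
        simp only [majorant]
        nlinarith [sq_nonneg (2 * ‖η‖ * a t - ‖η.2 t‖)]
    _ = 8 * ‖η‖ ^ 2 * ∫ t, a t ^ 2 ∂μ01 + 2 * ‖η.2‖ ^ 2 := by
        rw [integral_add (ha.integrable_sq.const_mul _) (hz.const_mul _), integral_const_mul,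
          integral_const_mul, integral_norm_sq_eq_norm_sq]
    _ ≤ (8 * K + 2) * ‖η‖ ^ 2 := by
        have := norm_snd_le η
        have := norm_nonneg η.2
        nlinarith [sq_nonneg ‖η‖]

theorem abs_integral_inner_add_inner_le {A B : ℝ → E n} {a f : ℝ → ℝ} (ha0 : 0 ≤ᵐ[μ01] a)
    (ha : MemLp a 2 μ01) (hf0 : 0 ≤ᵐ[μ01] f) (hf : MemLp f 2 μ01)
    (hA : ∀ᵐ t ∂μ01, ‖A t‖ ≤ a t * f t) (hB : ∀ᵐ t ∂μ01, ‖B t‖ ≤ f t)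
    {K : ℝ} (hK : ∫ t, a t ^ 2 ∂μ01 ≤ K) (η : Hsp n) :
    |∫ t, (⟪A t, pathH η t⟫ + ⟪B t, η.2 t⟫) ∂μ01|
      ≤ √(∫ t, f t ^ 2 ∂μ01) * √(8 * K + 2) * ‖η‖ := by
  have hm0 : 0 ≤ᵐ[μ01] majorant a η := by
    filter_upwards [ha0] with t ht using add_nonneg (mul_nonneg (by positivity) ht) (norm_nonneg _)
  calc |∫ t, (⟪A t, pathH η t⟫ + ⟪B t, η.2 t⟫) ∂μ01|
      ≤ ∫ t, f t * majorant a η t ∂μ01 := by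
        rw [← Real.norm_eq_abs]
        refine norm_integral_le_of_norm_le (hf.integrable_mul (memLp_majorant ha η)) ?_
        filter_upwards [hA, hB] with t hAt hBt
        have h1 : ‖⟪A t, pathH η t⟫‖ ≤ a t * f t * (2 * ‖η‖) :=
          (norm_inner_le_norm _ _).trans <|
            mul_le_mul hAt (norm_pathH_le η t) (norm_nonneg _) ((norm_nonneg _).trans hAt)
        have h2 : ‖⟪B t, η.2 t⟫‖ ≤ f t * ‖η.2 t‖ :=
          (norm_inner_le_norm _ _).trans (by gcongr)
        calc _ ≤ ‖⟪A t, pathH η t⟫‖ + ‖⟪B t, η.2 t⟫‖ := norm_add_le _ _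
          _ ≤ _ := add_le_add h1 h2
          _ = f t * majorant a η t := by unfold majorant; ring
    _ ≤ √(∫ t, f t ^ 2 ∂μ01) * √(∫ t, majorant a η t ^ 2 ∂μ01) :=
        integral_mul_le_sqrt_mul_sqrt hf0 hm0 hf (memLp_majorant ha η)
    _ ≤ √(∫ t, f t ^ 2 ∂μ01) * √((8 * K + 2) * ‖η‖ ^ 2) := by
        gcongr; exact integral_majorant_sq_le ha hK η
    _ = √(∫ t, f t ^ 2 ∂μ01) * √(8 * K + 2) * ‖η‖ := by
        rw [Real.sqrt_mul' _ (sq_nonneg _), Real.sqrt_sq (norm_nonneg _), mul_assoc]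

theorem memLp_one_add_norm (w : Lp (E n) 2 μ01) : MemLp (fun t => 1 + ‖w t‖) 2 μ01 :=
  (memLp_const (1:ℝ)).add (Lp.memLp w).norm

theorem memLp_weight (p ξ : Hsp n) : MemLp (fun t => 1 + ‖p.2 t‖ + ‖ξ.2 t‖) 2 μ01 :=
  (memLp_one_add_norm p.2).add (Lp.memLp ξ.2).norm

theorem integral_weight_sq_le (p : Hsp n) {ξ : Hsp n} (hξ : ‖ξ‖ ≤ 1) :
    ∫ t, (1 + ‖p.2 t‖ + ‖ξ.2 t‖) ^ 2 ∂μ01 ≤ 3 * (2 + ‖p.2‖ ^ 2) := by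
  have hw := (Lp.memLp p.2).norm.integrable_sq
  have hz := (Lp.memLp ξ.2).norm.integrable_sq
  calc ∫ t, (1 + ‖p.2 t‖ + ‖ξ.2 t‖) ^ 2 ∂μ01
      ≤ ∫ t, 3 * (1 + ‖p.2 t‖ ^ 2 + ‖ξ.2 t‖ ^ 2) ∂μ01 :=
        integral_mono (memLp_weight p ξ).integrable_sq
          ((((integrable_const 1).add hw).add hz).const_mul 3) fun t => by
          nlinarith [sq_nonneg (‖p.2 t‖ - ‖ξ.2 t‖), sq_nonneg (1 - ‖p.2 t‖),
            sq_nonneg (1 - ‖ξ.2 t‖)]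
    _ = 3 * (1 + ‖p.2‖ ^ 2 + ‖ξ.2‖ ^ 2) := by
        rw [integral_const_mul, integral_add, integral_add, integral_norm_sq_eq_norm_sq,
          integral_norm_sq_eq_norm_sq]
        · simp
        exacts [integrable_const _, hw, (integrable_const _).add hw, hz]
    _ ≤ 3 * (2 + ‖p.2‖ ^ 2) := by
        have := (norm_snd_le ξ).trans hξ
        have := norm_nonneg ξ.2
        nlinarith

theorem ContDiffOn.continuousOn_of_hasGradientAt_comp_add {X G : Type*} [NormedAddCommGroup X]
    [NormedSpace ℝ X] [NormedAddCommGroup G] [InnerProductSpace ℝ G] [CompleteSpace G]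
    {f : X → ℝ} {s : Set X} (hf : ContDiffOn ℝ 1 f s) (hs : IsOpen s) (J : G →L[ℝ] X)
    {g : X → G} (hg : ∀ x ∈ s, HasGradientAt (fun y => f (x + J y)) (g x) 0) :
    ContinuousOn g s := by
  have hderiv : ∀ x ∈ s, g x = (InnerProductSpace.toDual ℝ G).symm ((fderiv ℝ f x).comp J) := by
    intro x hx
    have hchain : HasFDerivAt (fun y => f (x + J y)) ((fderiv ℝ f x).comp J) 0 := by
      refine HasFDerivAt.comp (0 : G) ?_ ((J.hasFDerivAt).const_add x)
      simpa using ((hf.differentiableOn one_ne_zero).differentiableAt (hs.mem_nhds hx)).hasFDerivAt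
    rw [← (hg x hx).hasFDerivAt.unique hchain, LinearIsometryEquiv.symm_apply_apply]
  refine ContinuousOn.congr ?_ hderiv
  exact (InnerProductSpace.toDual ℝ G).symm.continuous.comp_continuousOn
    ((hf.continuousOn_fderiv_of_isOpen hs le_rfl).clm_comp continuousOn_const)

theorem continuousOn_partialGradient_q {U : Set (E n)} (hU : IsOpen U) {L : ℝ → E n → E n → ℝ}
    {Lq : ℝ → E n → E n → E n}
    (hL : ContDiffOn ℝ 1 (fun z : ℝ × E n × E n => L z.1 z.2.1 z.2.2) (univ ×ˢ U ×ˢ univ))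
    (hLq : ∀ t, ∀ q ∈ U, ∀ v, HasGradientAt (fun q' => L t q' v) (Lq t q v) q) :
    ContinuousOn (fun z : ℝ × E n × E n => Lq z.1 z.2.1 z.2.2) (univ ×ˢ U ×ˢ univ) := by
  refine hL.continuousOn_of_hasGradientAt_comp_add (isOpen_univ.prod (hU.prod isOpen_univ))
    ((ContinuousLinearMap.inr ℝ ℝ _).comp (ContinuousLinearMap.inl ℝ (E n) (E n)))
    fun ⟨t, q, v⟩ ⟨_, hq, _⟩ => ?_
  rw [hasGradientAt_iff_hasFDerivAt]
  simpa using (hasFDerivAt_comp_add_left (f := (L t · v)) (x := 0) q).2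
    (by simpa using (hLq t q hq v).hasFDerivAt)

theorem continuousOn_partialGradient_v {U : Set (E n)} (hU : IsOpen U) {L : ℝ → E n → E n → ℝ}
    {Lv : ℝ → E n → E n → E n}
    (hL : ContDiffOn ℝ 1 (fun z : ℝ × E n × E n => L z.1 z.2.1 z.2.2) (univ ×ˢ U ×ˢ univ))
    (hLv : ∀ t, ∀ q ∈ U, ∀ v, HasGradientAt (fun v' => L t q v') (Lv t q v) v) :
    ContinuousOn (fun z : ℝ × E n × E n => Lv z.1 z.2.1 z.2.2) (univ ×ˢ U ×ˢ univ) := by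
  refine hL.continuousOn_of_hasGradientAt_comp_add (isOpen_univ.prod (hU.prod isOpen_univ))
    ((ContinuousLinearMap.inr ℝ ℝ _).comp (ContinuousLinearMap.inr ℝ (E n) (E n)))
    fun ⟨t, q, v⟩ ⟨_, hq, _⟩ => ?_
  rw [hasGradientAt_iff_hasFDerivAt]
  simpa using (hasFDerivAt_comp_add_left (f := (L t q ·)) (x := 0) v).2
    (by simpa using (hLv t q hq v).hasFDerivAt)

abbrev alongPath {β : Type*} (f : ℝ → E n → E n → β) (p : Hsp n) (t : ℝ) : β :=
  f t (pathH p t) (p.2 t)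

theorem aestronglyMeasurable_alongPath {β : Type*} [NormedAddCommGroup β] [MeasurableSpace β]
    [BorelSpace β] [SecondCountableTopology β] {U : Set (E n)} (hU : IsOpen U)
    {f : ℝ → E n → E n → β}
    (hf : ContinuousOn (fun z : ℝ × E n × E n => f z.1 z.2.1 z.2.2) (univ ×ˢ U ×ˢ univ))
    {p : Hsp n} (hp : p ∈ actO U) : AEStronglyMeasurable (alongPath f p) μ01 := by
  classical
  have hS : MeasurableSet (univ ×ˢ U ×ˢ univ : Set (ℝ × E n × E n)) :=
    (isOpen_univ.prod (hU.prod isOpen_univ)).measurableSet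
  have hΦ : AEMeasurable (fun t => (t, pathH p t, p.2 t)) μ01 :=
    aemeasurable_id.prodMk ((aestronglyMeasurable_pathH p).aemeasurable.prodMk
      (Lp.aestronglyMeasurable p.2).aemeasurable)
  refine ((hf.measurable_piecewise (continuousOn_const (c := 0)) hS).comp_aemeasurable
    hΦ).aestronglyMeasurable.congr ?_
  filter_upwards [ae_mem_Icc] with t ht
  simp [alongPath, hp t ht]

theorem exists_closedBall_pathH_subset {U : Set (E n)} (hU : IsOpen U) {p : Hsp n}
    (hp : p ∈ actO U) : ∃ δ > 0, ∀ t ∈ Icc (0:ℝ) 1, closedBall (pathH p t) δ ⊆ U := by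
  obtain ⟨δ, hδ, hsub⟩ := (isCompact_Icc.image_of_continuousOn
    (continuousOn_pathH p)).exists_cthickening_subset_open hU (image_subset_iff.2 hp)
  exact ⟨δ, hδ, fun t ht => (closedBall_subset_cthickening (mem_image_of_mem _ ht) δ).trans hsub⟩

theorem add_mem_actO {U : Set (E n)} {p ξ : Hsp n} {δ : ℝ}
    (hδ : ∀ t ∈ Icc (0:ℝ) 1, closedBall (pathH p t) δ ⊆ U) (hξ : 2 * ‖ξ‖ ≤ δ) :
    p + ξ ∈ actO U := fun t ht => by
  rw [pathH_add p ξ t ht]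
  exact hδ t ht (by simpa [mem_closedBall_iff_norm] using (norm_pathH_le ξ t).trans hξ)

theorem dAct_smul (Lq Lv : ℝ → E n → E n → E n) (p : Hsp n) (c : ℝ) (ξ : Hsp n) :
    dAct Lq Lv p (c • ξ) = c * dAct Lq Lv p ξ := by
  rw [dAct, dAct, ← smul_eq_mul, ← integral_smul]
  refine integral_congr_ae ?_
  filter_upwards [ae_mem_Icc, Lp.coeFn_smul c ξ.2] with t ht hw
  simp only [pathH_smul c ξ t ht, Prod.smul_snd, hw, Pi.smul_apply, inner_smul_right,
    smul_eq_mul]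
  ring

structure IsContinuousL1Lagrangian (U : Set (E n)) (L : ℝ → E n → E n → ℝ)
    (Lq Lv : ℝ → E n → E n → E n) (ℓ : ℝ) : Prop where
  isOpen : IsOpen U
  continuousOn_L : ContinuousOn (fun z : ℝ × E n × E n => L z.1 z.2.1 z.2.2) (univ ×ˢ U ×ˢ univ)
  continuousOn_Lq :
    ContinuousOn (fun z : ℝ × E n × E n => Lq z.1 z.2.1 z.2.2) (univ ×ˢ U ×ˢ univ)
  continuousOn_Lv :
    ContinuousOn (fun z : ℝ × E n × E n => Lv z.1 z.2.1 z.2.2) (univ ×ˢ U ×ˢ univ)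
  l1 : ∀ t ∈ Icc (0:ℝ) 1, IsL1Lagrangian U (L t) (Lq t) (Lv t) ℓ

namespace IsContinuousL1Lagrangian

variable {U : Set (E n)} {L : ℝ → E n → E n → ℝ} {Lq Lv : ℝ → E n → E n → E n} {ℓ : ℝ}
  (h : IsContinuousL1Lagrangian U L Lq Lv ℓ) {p : Hsp n}
include h

theorem nonneg (hp : p ∈ actO U) : 0 ≤ ℓ :=
  (h.l1 0 (left_mem_Icc.2 zero_le_one)).nonneg (hp 0 (left_mem_Icc.2 zero_le_one))

theorem exists_growth_bound (hp : p ∈ actO U) : ∃ M, 0 ≤ M ∧ ∀ t ∈ Icc (0:ℝ) 1, ∀ v : E n,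
    |L t (pathH p t) v| ≤ M * (1 + ‖v‖) ^ 2 ∧ ‖Lq t (pathH p t) v‖ ≤ M * (1 + ‖v‖) ^ 2 ∧
      ‖Lv t (pathH p t) v‖ ≤ M * (1 + ‖v‖) := by
  have hΦ : ContinuousOn (fun t => (t, pathH p t, (0 : E n))) (Icc 0 1) :=
    continuousOn_id.prodMk ((continuousOn_pathH p).prodMk continuousOn_const)
  have hmaps : MapsTo (fun t => (t, pathH p t, (0 : E n))) (Icc 0 1) (univ ×ˢ U ×ˢ univ) :=
    fun t ht => ⟨trivial, hp t ht, trivial⟩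
  obtain ⟨M, hM⟩ := isCompact_Icc.exists_bound_of_continuousOn
    (((h.continuousOn_L.comp hΦ hmaps).abs.add (h.continuousOn_Lq.comp hΦ hmaps).norm).add
      (h.continuousOn_Lv.comp hΦ hmaps).norm)
  have hℓ := h.nonneg hp
  have hM0 : 0 ≤ M := (norm_nonneg _).trans (hM 0 (left_mem_Icc.2 zero_le_one))
  refine ⟨M + ℓ, by positivity, fun t ht v => ?_⟩
  have hMt := (le_abs_self _).trans (hM t ht)
  simp only [Function.comp_apply, Pi.add_apply] at hMt
  have := abs_nonneg (L t (pathH p t) 0)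
  have := norm_nonneg (Lq t (pathH p t) 0)
  have := norm_nonneg (Lv t (pathH p t) 0)
  have hl := h.l1 t ht
  refine ⟨(hl.abs_L_le (hp t ht) v).trans ?_, (hl.norm_Lq_le (hp t ht) v).trans ?_,
    (hl.norm_Lv_le (hp t ht) v).trans ?_⟩ <;> gcongr <;> linarith

theorem integrable_alongPath_L (hp : p ∈ actO U) : Integrable (alongPath L p) μ01 := by
  obtain ⟨M, -, hM⟩ := h.exists_growth_bound hp
  refine ((memLp_one_add_norm p.2).integrable_sq.const_mul M).mono'
    (aestronglyMeasurable_alongPath h.isOpen h.continuousOn_L hp) ?_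
  filter_upwards [ae_mem_Icc] with t ht using (hM t ht _).1

theorem integrable_alongPath_Lq (hp : p ∈ actO U) : Integrable (alongPath Lq p) μ01 := by
  obtain ⟨M, -, hM⟩ := h.exists_growth_bound hp
  refine ((memLp_one_add_norm p.2).integrable_sq.const_mul M).mono'
    (aestronglyMeasurable_alongPath h.isOpen h.continuousOn_Lq hp) ?_
  filter_upwards [ae_mem_Icc] with t ht using (hM t ht _).2.1

theorem memLp_alongPath_Lv (hp : p ∈ actO U) : MemLp (alongPath Lv p) 2 μ01 := by
  obtain ⟨M, -, hM⟩ := h.exists_growth_bound hp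
  refine ((memLp_one_add_norm p.2).const_mul M).of_le
    (aestronglyMeasurable_alongPath h.isOpen h.continuousOn_Lv hp) ?_
  filter_upwards [ae_mem_Icc] with t ht using (hM t ht _).2.2.trans (le_abs_self _)

theorem integrable_dAct_integrand (hp : p ∈ actO U) (ξ : Hsp n) :
    Integrable (fun t => ⟪alongPath Lq p t, pathH ξ t⟫ + ⟪alongPath Lv p t, ξ.2 t⟫) μ01 := by
  have hLv := h.memLp_alongPath_Lv hp
  refine Integrable.add ?_ ?_
  · refine ((h.integrable_alongPath_Lq hp).norm.mul_const (2 * ‖ξ‖)).mono'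
      ((aestronglyMeasurable_alongPath h.isOpen h.continuousOn_Lq hp).inner
        (aestronglyMeasurable_pathH ξ)) (ae_of_all _ fun t => ?_)
    exact (norm_inner_le_norm _ _).trans (by gcongr; exact norm_pathH_le ξ t)
  · exact (hLv.norm.integrable_mul (Lp.memLp ξ.2).norm).mono'
      (hLv.1.inner (Lp.aestronglyMeasurable ξ.2)) (ae_of_all _ fun t => norm_inner_le_norm _ _)

theorem dAct_add (hp : p ∈ actO U) (ξ η : Hsp n) :
    dAct Lq Lv p (ξ + η) = dAct Lq Lv p ξ + dAct Lq Lv p η := by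
  rw [dAct, dAct, dAct, ← integral_add (h.integrable_dAct_integrand hp ξ)
    (h.integrable_dAct_integrand hp η)]
  refine integral_congr_ae ?_
  filter_upwards [ae_pathH_add ξ η] with t ⟨_, hγ, hw⟩
  simp only [alongPath, hγ, hw, inner_add_right]
  ring

theorem exists_norm_dAct_le (hp : p ∈ actO U) : ∃ C, ∀ η : Hsp n, ‖dAct Lq Lv p η‖ ≤ C * ‖η‖ := by
  obtain ⟨M, hM0, hM⟩ := h.exists_growth_bound hp
  have ha := memLp_one_add_norm p.2
  refine ⟨_, fun η => abs_integral_inner_add_inner_le (A := alongPath Lq p) (B := alongPath Lv p)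
    (ae_of_all _ fun t => ?_) ha (ae_of_all _ fun t => ?_) (ha.const_mul M) ?_ ?_ le_rfl η⟩
  · simp only [Pi.zero_apply]; positivity
  · simp only [Pi.zero_apply]; positivity
  · filter_upwards [ae_mem_Icc] with t ht using (hM t ht _).2.1.trans_eq (by ring)
  · filter_upwards [ae_mem_Icc] with t ht using (hM t ht _).2.2

theorem exists_clm_eq_dAct (hp : p ∈ actO U) : ∃ D : Hsp n →L[ℝ] ℝ, ⇑D = dAct Lq Lv p :=
  ⟨LinearMap.mkContinuousOfExistsBound
    { toFun := dAct Lq Lv p, map_add' := h.dAct_add hp, map_smul' := dAct_smul Lq Lv p }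
    (h.exists_norm_dAct_le hp), rfl⟩

theorem abs_action_sub_sub_le (hp : p ∈ actO U) {δ : ℝ}
    (hδ : ∀ t ∈ Icc (0:ℝ) 1, closedBall (pathH p t) δ ⊆ U) {ξ : Hsp n} (hξ : 2 * ‖ξ‖ ≤ δ) :
    |action L (p + ξ) - action L p - dAct Lq Lv p ξ|
      ≤ ℓ * ∫ t, majorant (fun t => 1 + ‖p.2 t‖ + ‖ξ.2 t‖) ξ t ^ 2 ∂μ01 := by
  have hmem := add_mem_actO hδ hξ
  have hℓ := h.nonneg hp
  have hsplit : action L (p + ξ) - action L p - dAct Lq Lv p ξ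
      = ∫ t, (alongPath L (p + ξ) t - alongPath L p t
        - (⟪alongPath Lq p t, pathH ξ t⟫ + ⟪alongPath Lv p t, ξ.2 t⟫)) ∂μ01 := by
    rw [integral_sub, integral_sub]
    · rfl
    exacts [h.integrable_alongPath_L hmem, h.integrable_alongPath_L hp,
      (h.integrable_alongPath_L hmem).sub (h.integrable_alongPath_L hp),
      h.integrable_dAct_integrand hp ξ]
  rw [hsplit, ← integral_const_mul, ← Real.norm_eq_abs]
  refine norm_integral_le_of_norm_le
    (((memLp_majorant (memLp_weight p ξ) ξ).integrable_sq).const_mul ℓ) ?_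
  filter_upwards [ae_pathH_add p ξ] with t ⟨ht, hγ, hw⟩
  have hγξ := norm_pathH_le ξ t
  have hball : closedBall (pathH p t) ‖pathH ξ t‖ ⊆ U :=
    (closedBall_subset_closedBall (hγξ.trans hξ)).trans (hδ t ht)
  simp only [alongPath, hγ, hw, Real.norm_eq_abs]
  refine ((h.l1 t ht).abs_L_taylor_le hball _ _).trans ?_
  have : (1 + ‖p.2 t‖ + ‖ξ.2 t‖) * ‖pathH ξ t‖ ≤ 2 * ‖ξ‖ * (1 + ‖p.2 t‖ + ‖ξ.2 t‖) := by
    rw [mul_comm]; gcongr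
  unfold majorant
  gcongr

theorem abs_dAct_sub_dAct_le (hp : p ∈ actO U) {δ : ℝ}
    (hδ : ∀ t ∈ Icc (0:ℝ) 1, closedBall (pathH p t) δ ⊆ U) {ξ : Hsp n} (hξ : 2 * ‖ξ‖ ≤ δ)
    {K : ℝ} (hK : ∫ t, (1 + ‖p.2 t‖ + ‖ξ.2 t‖) ^ 2 ∂μ01 ≤ K) (η : Hsp n) :
    |dAct Lq Lv (p + ξ) η - dAct Lq Lv p η|
      ≤ ℓ * √(∫ t, majorant (fun t => 1 + ‖p.2 t‖ + ‖ξ.2 t‖) ξ t ^ 2 ∂μ01)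
        * √(8 * K + 2) * ‖η‖ := by
  have hmem := add_mem_actO hδ hξ
  have hℓ := h.nonneg hp
  set a := fun t => 1 + ‖p.2 t‖ + ‖ξ.2 t‖
  have ha0 : ∀ t, 0 ≤ a t := fun t => by positivity
  have hsub : dAct Lq Lv (p + ξ) η - dAct Lq Lv p η
      = ∫ t, (⟪alongPath Lq (p + ξ) t - alongPath Lq p t, pathH η t⟫
        + ⟪alongPath Lv (p + ξ) t - alongPath Lv p t, η.2 t⟫) ∂μ01 := by
    rw [dAct, dAct, ← integral_sub (h.integrable_dAct_integrand hmem η)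
      (h.integrable_dAct_integrand hp η)]
    simp only [inner_sub_left]
    congr 1 with t
    ring
  have hbound := abs_integral_inner_add_inner_le
    (A := fun t => alongPath Lq (p + ξ) t - alongPath Lq p t)
    (B := fun t => alongPath Lv (p + ξ) t - alongPath Lv p t) (f := fun t => ℓ * majorant a ξ t)
    (ae_of_all _ ha0) (memLp_weight p ξ)
    (ae_of_all _ fun t => mul_nonneg hℓ (add_nonneg (mul_nonneg (by positivity) (ha0 t))
      (norm_nonneg _))) ((memLp_majorant (memLp_weight p ξ) ξ).const_mul ℓ) ?_ ?_ hK η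
  · simp_rw [mul_pow] at hbound
    rwa [integral_const_mul, Real.sqrt_mul' _ (integral_nonneg fun t => sq_nonneg _),
      Real.sqrt_sq hℓ, ← hsub] at hbound
  all_goals
    filter_upwards [ae_pathH_add p ξ] with t ⟨ht, hγ, hw⟩
    have hball : closedBall (pathH p t) ‖pathH ξ t‖ ⊆ U :=
      (closedBall_subset_closedBall ((norm_pathH_le ξ t).trans hξ)).trans (hδ t ht)
    have : a t * ‖pathH ξ t‖ + ‖ξ.2 t‖ ≤ majorant a ξ t := by
      unfold majorant; rw [mul_comm (a t)]; gcongr; exact norm_pathH_le ξ t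
    simp only [alongPath, hγ, hw]
  · calc _ ≤ ℓ * a t * (a t * ‖pathH ξ t‖ + ‖ξ.2 t‖) := (h.l1 t ht).norm_Lq_sub_le hball _ _
      _ ≤ ℓ * a t * majorant a ξ t := mul_le_mul_of_nonneg_left this (mul_nonneg hℓ (ha0 t))
      _ = a t * (ℓ * majorant a ξ t) := by ring
  · exact ((h.l1 t ht).norm_Lv_sub_le hball _ _).trans (mul_le_mul_of_nonneg_left this hℓ)

theorem hasFDerivAt_action (hp : p ∈ actO U) {D : Hsp n →L[ℝ] ℝ} (hD : ⇑D = dAct Lq Lv p) :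
    HasFDerivAt (action L) D p := by
  obtain ⟨δ, hδ0, hδ⟩ := exists_closedBall_pathH_subset h.isOpen hp
  have hℓ := h.nonneg hp
  rw [hasFDerivAt_iff_isLittleO_nhds_zero]
  refine (Asymptotics.IsBigO.of_bound (ℓ * (8 * (3 * (2 + ‖p.2‖ ^ 2)) + 2)) ?_).trans_isLittleO
    (Asymptotics.isLittleO_norm_pow_id one_lt_two)
  filter_upwards [ball_mem_nhds (0 : Hsp n) (lt_min (half_pos hδ0) one_pos)] with ξ hξ
  rw [mem_ball_zero_iff, lt_min_iff] at hξ
  rw [hD, Real.norm_eq_abs, norm_pow, norm_norm, mul_assoc]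
  refine (h.abs_action_sub_sub_le hp hδ (by linarith)).trans ?_
  gcongr
  exact integral_majorant_sq_le (memLp_weight p ξ) (integral_weight_sq_le p hξ.2.le) ξ

theorem continuousOn_of_eq_dAct {D : Hsp n → Hsp n →L[ℝ] ℝ}
    (hD : ∀ p ∈ actO U, ⇑(D p) = dAct Lq Lv p) : ContinuousOn D (actO U) := by
  intro p hp
  obtain ⟨δ, hδ0, hδ⟩ := exists_closedBall_pathH_subset h.isOpen hp
  have hℓ := h.nonneg hp
  set C := 8 * (3 * (2 + ‖p.2‖ ^ 2)) + 2
  have hC : 0 ≤ C := by positivity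
  refine (continuousAt_of_locally_lipschitz (lt_min (half_pos hδ0) one_pos) (ℓ * C)
    fun y hy => ?_).continuousWithinAt
  obtain ⟨ξ, rfl⟩ : ∃ ξ, y = p + ξ := ⟨y - p, by abel⟩
  rw [dist_eq_norm, add_sub_cancel_left, lt_min_iff] at hy
  rw [dist_eq_norm, dist_eq_norm, add_sub_cancel_left]
  have hK := integral_weight_sq_le p hy.2.le
  refine ContinuousLinearMap.opNorm_le_bound _ (by positivity) fun η => ?_
  rw [sub_apply, hD _ (add_mem_actO hδ (by linarith)), hD p hp,
    Real.norm_eq_abs]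
  calc _ ≤ _ := h.abs_dAct_sub_dAct_le hp hδ (by linarith) hK η
    _ ≤ ℓ * √(C * ‖ξ‖ ^ 2) * √C * ‖η‖ := by
        gcongr; exact integral_majorant_sq_le (memLp_weight p ξ) hK ξ
    _ = ℓ * C * ‖ξ‖ * ‖η‖ := by
        rw [Real.sqrt_mul hC, Real.sqrt_sq (norm_nonneg _)]
        linear_combination ℓ * ‖ξ‖ * ‖η‖ * Real.mul_self_sqrt hC

end IsContinuousL1Lagrangian

end

theorem action_wellDefined_and_C1_general
    {n : ℕ} (U : Set (E n)) (hU : IsOpen U)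
    (L : ℝ → E n → E n → ℝ)
    (Lq Lv : ℝ → E n → E n → E n)
    (Lvv Lqv Lvq Lqq : ℝ → E n → E n → (E n →L[ℝ] E n))
    (hL : ContDiffOn ℝ ∞ (fun z : ℝ × E n × E n => L z.1 z.2.1 z.2.2)
      (Set.univ ×ˢ U ×ˢ Set.univ))
    (hLq : ∀ (t : ℝ), ∀ q ∈ U, ∀ v : E n, HasGradientAt (fun q' => L t q' v) (Lq t q v) q)
    (hLv : ∀ (t : ℝ), ∀ q ∈ U, ∀ v : E n, HasGradientAt (fun v' => L t q v') (Lv t q v) v)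
    (hLvv : ∀ (t : ℝ), ∀ q ∈ U, ∀ v : E n, HasFDerivAt (fun v' => Lv t q v') (Lvv t q v) v)
    (hLqv : ∀ (t : ℝ), ∀ q ∈ U, ∀ v : E n, HasFDerivAt (fun q' => Lv t q' v) (Lqv t q v) q)
    (hLvq : ∀ (t : ℝ), ∀ q ∈ U, ∀ v : E n, HasFDerivAt (fun v' => Lq t q v') (Lvq t q v) v)
    (hLqq : ∀ (t : ℝ), ∀ q ∈ U, ∀ v : E n, HasFDerivAt (fun q' => Lq t q' v) (Lqq t q v) q)
    (ℓ₁ : ℝ)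
    (hL1 : ∀ t ∈ Set.Icc (0:ℝ) 1, ∀ q ∈ U, ∀ v : E n,
      ‖Lvv t q v‖ ≤ ℓ₁ ∧ ‖Lqv t q v‖ ≤ ℓ₁ * (1 + ‖v‖) ∧ ‖Lvq t q v‖ ≤ ℓ₁ * (1 + ‖v‖)
        ∧ ‖Lqq t q v‖ ≤ ℓ₁ * (1 + ‖v‖ ^ 2))
 :
    (∀ p ∈ actO U, Integrable (fun t => L t (pathH p t) (p.2 t)) μ01) ∧
    ∃ D : Hsp n → (Hsp n →L[ℝ] ℝ),
      (∀ p ∈ actO U, HasFDerivAt (action L) (D p) p) ∧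
      ContinuousOn D (actO U) ∧
      (∀ p ∈ actO U, ∀ ξ : Hsp n, D p ξ = dAct Lq Lv p ξ) := by
  have hL₁ : ContDiffOn ℝ 1 (fun z : ℝ × E n × E n => L z.1 z.2.1 z.2.2) (univ ×ˢ U ×ˢ univ) :=
    hL.of_le (by exact_mod_cast le_top)
  have h : IsContinuousL1Lagrangian U L Lq Lv ℓ₁ :=
    { isOpen := hU
      continuousOn_L := hL.continuousOn
      continuousOn_Lq := continuousOn_partialGradient_q hU hL₁ hLq
      continuousOn_Lv := continuousOn_partialGradient_v hU hL₁ hLv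
      l1 := fun t ht => .of_hasFDerivAt (hLq t) (hLv t) (hLvv t) (hLqv t) (hLvq t) (hLqq t)
        (hL1 t ht) }
  have hD : ∀ p, ∃ D : Hsp n →L[ℝ] ℝ, p ∈ actO U → ⇑D = dAct Lq Lv p := fun p => by
    by_cases hp : p ∈ actO U
    · exact (h.exists_clm_eq_dAct hp).imp fun D hD _ => hD
    · exact ⟨0, fun hp' => absurd hp' hp⟩
  choose D hD using hD
  exact ⟨fun p hp => h.integrable_alongPath_L hp, D, fun p hp => h.hasFDerivAt_action hp (hD p hp),
    h.continuousOn_of_eq_dAct hD, fun p hp ξ => congrFun (hD p hp) ξ⟩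

/-- The action functional `S_L` is well defined and continuously Fréchet
differentiable on `𝒪`, with Fréchet differential at `γ ∈ 𝒪` given by
`ξ ↦ ∫_0^1 ( ∂L/∂q(t,γ,γ')·ξ + ∂L/∂v(t,γ,γ')·ξ' ) dt`. -/
theorem action_wellDefined_and_C1
    {n : ℕ} (U : Set (E n)) (hU : IsOpen U)
    (L : ℝ → E n → E n → ℝ)
    (Lq Lv : ℝ → E n → E n → E n)
    (Lvv Lqv Lvq Lqq : ℝ → E n → E n → (E n →L[ℝ] E n))
    (hL : ContDiffOn ℝ ∞ (fun z : ℝ × E n × E n => L z.1 z.2.1 z.2.2)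
      (Set.univ ×ˢ U ×ˢ Set.univ))
    (hLq : ∀ (t : ℝ), ∀ q ∈ U, ∀ v : E n, HasGradientAt (fun q' => L t q' v) (Lq t q v) q)
    (hLv : ∀ (t : ℝ), ∀ q ∈ U, ∀ v : E n, HasGradientAt (fun v' => L t q v') (Lv t q v) v)
    (hLvv : ∀ (t : ℝ), ∀ q ∈ U, ∀ v : E n, HasFDerivAt (fun v' => Lv t q v') (Lvv t q v) v)
    (hLqv : ∀ (t : ℝ), ∀ q ∈ U, ∀ v : E n, HasFDerivAt (fun q' => Lv t q' v) (Lqv t q v) q)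
    (hLvq : ∀ (t : ℝ), ∀ q ∈ U, ∀ v : E n, HasFDerivAt (fun v' => Lq t q v') (Lvq t q v) v)
    (hLqq : ∀ (t : ℝ), ∀ q ∈ U, ∀ v : E n, HasFDerivAt (fun q' => Lq t q' v) (Lqq t q v) q)
    (ℓ₁ : ℝ) (hℓ₁ : 0 < ℓ₁)
    (hL1 : ∀ t ∈ Set.Icc (0:ℝ) 1, ∀ q ∈ U, ∀ v : E n,
      ‖Lvv t q v‖ ≤ ℓ₁ ∧ ‖Lqv t q v‖ ≤ ℓ₁ * (1 + ‖v‖) ∧ ‖Lvq t q v‖ ≤ ℓ₁ * (1 + ‖v‖)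
        ∧ ‖Lqq t q v‖ ≤ ℓ₁ * (1 + ‖v‖ ^ 2))
 :
    (∀ p ∈ actO U, Integrable (fun t => L t (pathH p t) (p.2 t)) μ01) ∧
    ∃ D : Hsp n → (Hsp n →L[ℝ] ℝ),
      (∀ p ∈ actO U, HasFDerivAt (action L) (D p) p) ∧
      ContinuousOn D (actO U) ∧
      (∀ p ∈ actO U, ∀ ξ : Hsp n, D p ξ = dAct Lq Lv p ξ) :=
  action_wellDefined_and_C1_general U hU L Lq Lv Lvv Lqv Lvq Lqq hL hLq hLv hLvv hLqv hLvq hLqq ℓ₁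
    hL1
end

section
/- (Du Bois-Reymond step.) Let (x,w) ∈ 𝒪 be such that DS_L(x,w)[ξ] = 0 for every ξ = (y,z) ∈ H whose path vanishes at both endpoints (i.e. y = 0 and ∫₀¹ z(s) ds = 0). Then there exists a vector u ∈ ℝ^n such that ∂L/∂v(t, γ_{x,w}(t), w(t)) = u + ∫₀^t ∂L/∂q(s, γ_{x,w}(s), w(s)) ds for almost every t ∈ [0,1]. -/
open MeasureTheory Set Filter Topology ContDiff
open scoped RealInnerProductSpace

/-!
Test criticality with the variations `ξ = (0, z)`, `∫ z = 0`, whose path is `Z t = ∫₀ᵗ z`.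
Exchanging the order of integration in `∫ ⟪Lq, Z⟫` (Fubini) turns `DS_L(p)[ξ] = 0` into
`∫ ⟪Lv - G, z⟫ = 0`, where `G` is the primitive of `Lq` along the path. Thus `Lv - G` is
`L²`-orthogonal to every mean-zero function, and testing with `z = (Lv - G) - ⨍ (Lv - G)` shows
that it is a.e. constant. The growth bounds (L1') make `Lv` square-integrable and `Lq`
integrable along the path, which is what makes these test functions admissible.
-/

section PrimitiveOnReal

variable {F : Type*} [NormedAddCommGroup F] [NormedSpace ℝ F]
  {H : Type*} [NormedAddCommGroup H] [InnerProductSpace ℝ H] {μ : Measure ℝ}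

theorem norm_setIntegral_le_integral_norm {α : Type*} [MeasurableSpace α] {ν : Measure α}
    {g : α → F} (s : Set α) (hg : Integrable g ν) :
    ‖∫ x in s, g x ∂ν‖ ≤ ∫ x, ‖g x‖ ∂ν :=
  (norm_integral_le_integral_norm _).trans <|
    integral_mono_measure Measure.restrict_le_self (.of_forall fun _ => norm_nonneg _) hg.norm

theorem setIntegral_Ioc_eq_setIntegral_Iic {a : ℝ} (ha : μ (Iic a) = 0) (g : ℝ → F) (t : ℝ) :
    ∫ s in Ioc a t, g s ∂μ = ∫ s in Iic t, g s ∂μ := by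
  have hset : Iic t \ Iic a = Ioc a t := by
    ext s; simp [and_comm]
  rw [← hset]
  exact setIntegral_congr_set (sdiff_null_ae_eq_self ha)

theorem setIntegral_Ici_eq_integral_sub_setIntegral_Iic [NullSingletonClass μ] {g : ℝ → F}
    (hg : Integrable g μ) (s : ℝ) :
    ∫ t in Ici s, g t ∂μ = ∫ t, g t ∂μ - ∫ t in Iic s, g t ∂μ := by
  rw [← integral_add_compl measurableSet_Ici hg, compl_Ici,
    setIntegral_congr_set (Iio_ae_eq_Iic (μ := μ)), add_sub_cancel_right]

theorem continuous_setIntegral_Iic [NullSingletonClass μ] {g : ℝ → F} (hg : Integrable g μ) :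
    Continuous fun t => ∫ s in Iic t, g s ∂μ := by
  have h : ∀ t, ∫ s in Iic t, g s ∂μ = (∫ s in Iic 0, g s ∂μ) + ∫ s in 0..t, g s ∂μ := fun t => by
    rw [← intervalIntegral.integral_Iic_sub_Iic hg.integrableOn hg.integrableOn, add_sub_cancel]
  rw [funext h]
  exact continuous_const.add (hg.continuous_primitive 0)

theorem memLp_setIntegral_Iic [IsFiniteMeasure μ] [NullSingletonClass μ] {g : ℝ → F}
    (hg : Integrable g μ) (p : ENNReal) :
    MemLp (fun t => ∫ s in Iic t, g s ∂μ) p μ :=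
  .of_bound (continuous_setIntegral_Iic hg).aestronglyMeasurable _
    (.of_forall fun _ => norm_setIntegral_le_integral_norm _ hg)

theorem MeasureTheory.Integrable.inner_setIntegral_Iic [NullSingletonClass μ] {g z : ℝ → H}
    (hg : Integrable g μ) (hz : Integrable z μ) :
    Integrable (fun t => ⟪g t, ∫ s in Iic t, z s ∂μ⟫) μ :=
  (hg.norm.mul_const _).mono'
    (hg.aestronglyMeasurable.inner (continuous_setIntegral_Iic hz).aestronglyMeasurable)
    (.of_forall fun _ => (norm_inner_le_norm _ _).trans <|
      mul_le_mul_of_nonneg_left (norm_setIntegral_le_integral_norm _ hz) (norm_nonneg _))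

theorem integral_inner_setIntegral_Iic [CompleteSpace H] [SFinite μ] {g z : ℝ → H}
    (hg : Integrable g μ) (hz : Integrable z μ) :
    ∫ t, ⟪g t, ∫ s in Iic t, z s ∂μ⟫ ∂μ = ∫ s, ⟪∫ t in Ici s, g t ∂μ, z s⟫ ∂μ := by
  set K : ℝ × ℝ → ℝ := {q | q.2 ≤ q.1}.indicator fun q => ⟪g q.1, z q.2⟫
  have hK : Integrable K (μ.prod μ) :=
    (hg.norm.mul_prod hz.norm).mono'
      ((hg.aestronglyMeasurable.comp_fst.inner hz.aestronglyMeasurable.comp_snd).indicator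
        (measurableSet_le measurable_snd measurable_fst))
      (.of_forall fun _ => (norm_indicator_le_norm_self _ _).trans (norm_inner_le_norm _ _))
  calc ∫ t, ⟪g t, ∫ s in Iic t, z s ∂μ⟫ ∂μ = ∫ t, ∫ s, K (t, s) ∂μ ∂μ := by
        refine integral_congr_ae (.of_forall fun t => ?_)
        simp only
        rw [← integral_inner hz.integrableOn, ← integral_indicator measurableSet_Iic]
        rfl
    _ = ∫ s, ∫ t, K (t, s) ∂μ ∂μ := integral_integral_swap hK
    _ = ∫ s, ⟪∫ t in Ici s, g t ∂μ, z s⟫ ∂μ := by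
        refine integral_congr_ae (.of_forall fun s => ?_)
        simp only
        rw [real_inner_comm, ← integral_inner hg.integrableOn, ← integral_indicator measurableSet_Ici]
        refine integral_congr_ae (.of_forall fun t => ?_)
        simp only [K, indicator_apply, mem_setOf_eq, mem_Ici, real_inner_comm]

end PrimitiveOnReal

section MeanZeroTest

variable {α : Type*} [MeasurableSpace α] {μ : Measure α}
  {H : Type*} [NormedAddCommGroup H] [InnerProductSpace ℝ H]

theorem MeasureTheory.MemLp.integrable_inner {f g : α → H} (hf : MemLp f 2 μ) (hg : MemLp g 2 μ) :
    Integrable (fun a => ⟪f a, g a⟫) μ :=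
  (L2.integrable_inner (hf.toLp f) (hg.toLp g)).congr <| by
    filter_upwards [hf.coeFn_toLp, hg.coeFn_toLp] with a hfa hga
    rw [hfa, hga]

theorem exists_ae_eq_const_of_forall_integral_inner_eq_zero [CompleteSpace H] [IsFiniteMeasure μ]
    {h : α → H} (hh : MemLp h 2 μ)
    (horth : ∀ z : Lp H 2 μ, ∫ a, z a ∂μ = 0 → ∫ a, ⟪h a, z a⟫ ∂μ = 0) :
    ∃ u : H, h =ᵐ[μ] fun _ => u := by
  set u := ⨍ a, h a ∂μ
  have hmem : MemLp (fun a => h a - u) 2 μ := hh.sub (memLp_const u)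
  set z := hmem.toLp
  have hz : (z : α → H) =ᵐ[μ] fun a => h a - u := hmem.coeFn_toLp
  have hz1 : Integrable z μ := (Lp.memLp z).integrable one_le_two
  have hmean : ∫ a, z a ∂μ = 0 := by
    rw [integral_congr_ae hz]
    exact integral_sub_average μ h
  have hzz : ⟪z, z⟫ = 0 := by
    calc ⟪z, z⟫ = ∫ a, (⟪h a, z a⟫ - ⟪u, z a⟫) ∂μ := by
          rw [L2.inner_def]
          refine integral_congr_ae ?_
          filter_upwards [hz] with a ha
          rw [← inner_sub_left, ← ha]
      _ = 0 := by
          rw [integral_sub (hh.integrable_inner (Lp.memLp z)) (hz1.const_inner u),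
            horth z hmean, integral_inner hz1, hmean, inner_zero_right, sub_zero]
  refine ⟨u, ?_⟩
  filter_upwards [hz, inner_self_eq_zero.mp hzz ▸ Lp.coeFn_zero H 2 μ] with a ha h0
  rw [← sub_eq_zero, ← ha, h0, Pi.zero_apply]

end MeanZeroTest

theorem exists_ae_eq_const_add_setIntegral_Iic {μ : Measure ℝ} [IsFiniteMeasure μ]
    [NullSingletonClass μ] {H : Type*} [NormedAddCommGroup H] [InnerProductSpace ℝ H]
    [CompleteSpace H] {f g : ℝ → H} (hf : MemLp f 2 μ) (hg : Integrable g μ)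
    (hcrit : ∀ z : Lp H 2 μ, ∫ s, z s ∂μ = 0 →
      ∫ t, (⟪g t, ∫ s in Iic t, z s ∂μ⟫ + ⟪f t, z t⟫) ∂μ = 0) :
    ∃ u : H, ∀ᵐ t ∂μ, f t = u + ∫ s in Iic t, g s ∂μ := by
  set G : ℝ → H := fun t => ∫ s in Iic t, g s ∂μ
  have hG : MemLp G 2 μ := memLp_setIntegral_Iic hg 2
  suffices h : ∀ z : Lp H 2 μ, ∫ s, z s ∂μ = 0 → ∫ t, ⟪f t - G t, z t⟫ ∂μ = 0 by
    obtain ⟨u, hu⟩ := exists_ae_eq_const_of_forall_integral_inner_eq_zero (hf.sub hG) h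
    refine ⟨u, ?_⟩
    filter_upwards [hu] with t ht
    rw [← ht, Pi.sub_apply, sub_add_cancel]
  intro z hz
  have hz1 : Integrable z μ := (Lp.memLp z).integrable one_le_two
  have hGz : Integrable (fun t => ⟪G t, z t⟫) μ := hG.integrable_inner (Lp.memLp z)
  have hfz : Integrable (fun t => ⟪f t, z t⟫) μ := hf.integrable_inner (Lp.memLp z)
  -- integration by parts; the boundary term `⟪∫ g, ∫ z⟫` vanishes
  have hparts : ∫ t, ⟪g t, ∫ s in Iic t, z s ∂μ⟫ ∂μ = -∫ t, ⟪G t, z t⟫ ∂μ := by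
    simp_rw [integral_inner_setIntegral_Iic hg hz1,
      setIntegral_Ici_eq_integral_sub_setIntegral_Iic hg, inner_sub_left]
    rw [integral_sub (hz1.const_inner _) hGz, integral_inner hz1, hz, inner_zero_right, zero_sub]
  have h := hcrit z hz
  rw [integral_add (hg.inner_setIntegral_Iic hz1) hfz, hparts] at h
  simp_rw [inner_sub_left]
  rw [integral_sub hfz hGz]
  linarith

section PartialGradient

variable {X : Type*} [NormedAddCommGroup X] [NormedSpace ℝ X]
  {H : Type*} [NormedAddCommGroup H] [InnerProductSpace ℝ H] [CompleteSpace H]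

theorem ContDiffOn.continuousOn_of_hasGradientAt_comp {Φ : X → ℝ} {S : Set X}
    (hΦ : ContDiffOn ℝ 1 Φ S) (hS : IsOpen S) {ι : H →L[ℝ] X} {e : X → H → X} {π : X → H}
    (he : ∀ z ∈ S, HasFDerivAt (e z) ι (π z)) (heπ : ∀ z, e z (π z) = z) {G : X → H}
    (hG : ∀ z ∈ S, HasGradientAt (Φ ∘ e z) (G z) (π z)) :
    ContinuousOn G S := by
  have hdual : ∀ z ∈ S,
      (InnerProductSpace.toDual ℝ H).symm (fderiv ℝ Φ z ∘L ι) = G z := fun z hz => by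
    have hΦz : HasFDerivAt Φ (fderiv ℝ Φ z) (e z (π z)) := by
      rw [heπ]
      exact ((hΦ.contDiffAt (hS.mem_nhds hz)).differentiableAt one_ne_zero).hasFDerivAt
    rw [← (hG z hz).hasFDerivAt.unique (hΦz.comp _ (he z hz)),
      LinearIsometryEquiv.symm_apply_apply]
  refine ContinuousOn.congr ?_ fun z hz => (hdual z hz).symm
  exact (InnerProductSpace.toDual ℝ H).symm.continuous.comp_continuousOn
    ((hΦ.continuousOn_fderiv_of_isOpen hS le_rfl).clm_comp continuousOn_const)

variable {U : Set H} {L : ℝ → H → H → ℝ}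

theorem continuousOn_of_hasGradientAt_velocity (hU : IsOpen U)
    (hL : ContDiffOn ℝ 1 (fun z : ℝ × H × H => L z.1 z.2.1 z.2.2) (univ ×ˢ U ×ˢ univ))
    {Lv : ℝ → H → H → H}
    (hLv : ∀ t, ∀ q ∈ U, ∀ v, HasGradientAt (fun v' => L t q v') (Lv t q v) v) :
    ContinuousOn (fun z : ℝ × H × H => Lv z.1 z.2.1 z.2.2) (univ ×ˢ U ×ˢ univ) :=
  hL.continuousOn_of_hasGradientAt_comp (isOpen_univ.prod (hU.prod isOpen_univ))
    (e := fun z v => (z.1, z.2.1, v)) (π := fun z => z.2.2)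
    (fun _ _ => (hasFDerivAt_prodMk_right _ _).comp _ (hasFDerivAt_prodMk_right _ _))
    (fun _ => rfl) fun z hz => hLv z.1 z.2.1 hz.2.1 z.2.2

theorem continuousOn_of_hasGradientAt_position (hU : IsOpen U)
    (hL : ContDiffOn ℝ 1 (fun z : ℝ × H × H => L z.1 z.2.1 z.2.2) (univ ×ˢ U ×ˢ univ))
    {Lq : ℝ → H → H → H}
    (hLq : ∀ t, ∀ q ∈ U, ∀ v, HasGradientAt (fun q' => L t q' v) (Lq t q v) q) :
    ContinuousOn (fun z : ℝ × H × H => Lq z.1 z.2.1 z.2.2) (univ ×ˢ U ×ˢ univ) :=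
  hL.continuousOn_of_hasGradientAt_comp (isOpen_univ.prod (hU.prod isOpen_univ))
    (e := fun z q => (z.1, q, z.2.2)) (π := fun z => z.2.1)
    (fun _ _ => (hasFDerivAt_prodMk_right _ _).comp _ (hasFDerivAt_prodMk_left _ _))
    (fun _ => rfl) fun z hz => hLq z.1 z.2.1 hz.2.1 z.2.2

end PartialGradient

theorem norm_le_norm_zero_add_of_norm_hasFDerivAt_le {E F : Type*} [NormedAddCommGroup E]
    [NormedSpace ℝ E] [NormedAddCommGroup F] [NormedSpace ℝ F] {f : E → F} {f' : E → E →L[ℝ] F}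
    (hf : ∀ x, HasFDerivAt f (f' x) x) {v : E} {C : ℝ} (hC : ∀ x, ‖x‖ ≤ ‖v‖ → ‖f' x‖ ≤ C) :
    ‖f v‖ ≤ ‖f 0‖ + C * ‖v‖ := by
  have h := (convex_closedBall (0 : E) ‖v‖).norm_image_sub_le_of_norm_hasFDerivWithin_le
    (fun x _ => (hf x).hasFDerivWithinAt) (fun x hx => hC x (mem_closedBall_zero_iff.mp hx))
    (Metric.mem_closedBall_self (norm_nonneg v)) (mem_closedBall_zero_iff.mpr le_rfl)
  rw [sub_zero] at h
  linarith [norm_sub_norm_le (f v) (f 0)]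

theorem ContinuousOn.aestronglyMeasurable_comp {α X Y : Type*} [MeasurableSpace α]
    {μ : Measure α} [TopologicalSpace X] [SecondCountableTopology X] [MeasurableSpace X]
    [OpensMeasurableSpace X] [TopologicalSpace Y] [TopologicalSpace.PseudoMetrizableSpace Y] {G : X → Y}
    {S : Set X} (hG : ContinuousOn G S) (hS : MeasurableSet S) {φ : α → X}
    (hφ : AEMeasurable φ μ) (hmem : ∀ᵐ a ∂μ, φ a ∈ S) :
    AEStronglyMeasurable (fun a => G (φ a)) μ := by
  have h : (μ.map φ).restrict S = μ.map φ :=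
    Measure.restrict_eq_self_of_ae_mem ((ae_map_iff hφ hS).mpr hmem)
  exact (h ▸ hG.aestronglyMeasurable hS).comp_aemeasurable hφ


section Path

variable {n : ℕ}

theorem μ01_Iic_zero : μ01 (Iic 0) = 0 := by
  rw [Measure.restrict_apply measurableSet_Iic]
  refine measure_mono_null (fun s hs => ?_) (Real.volume_singleton (a := 0))
  exact le_antisymm hs.1 hs.2.1

theorem pathH_eq_add_setIntegral_Iic (p : Hsp n) (t : ℝ) :
    pathH p t = p.1 + ∫ s in Iic t, p.2 s ∂μ01 := by
  rw [pathH, setIntegral_Ioc_eq_setIntegral_Iic μ01_Iic_zero]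

theorem pathH_one (p : Hsp n) : pathH p 1 = p.1 + ∫ s, p.2 s ∂μ01 := by
  rw [pathH_eq_add_setIntegral_Iic, Measure.restrict_eq_self_of_ae_mem]
  filter_upwards [ae_restrict_mem measurableSet_Icc] with s hs using hs.2

theorem continuous_pathH (p : Hsp n) : Continuous (pathH p) := by
  simp_rw [funext (pathH_eq_add_setIntegral_Iic p)]
  exact continuous_const.add
    (continuous_setIntegral_Iic ((Lp.memLp p.2).integrable one_le_two))

variable {U : Set (E n)} {p : Hsp n} {Y : Type*} [NormedAddCommGroup Y]
  {Λ : ℝ → E n → E n → Y}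

theorem aestronglyMeasurable_comp_pathH (hU : IsOpen U)
    (hΛ : ContinuousOn (fun z : ℝ × E n × E n => Λ z.1 z.2.1 z.2.2) (univ ×ˢ U ×ˢ univ))
    (hp : p ∈ actO U) :
    AEStronglyMeasurable (fun t => Λ t (pathH p t) (p.2 t)) μ01 :=
  hΛ.aestronglyMeasurable_comp (isOpen_univ.prod (hU.prod isOpen_univ)).measurableSet
    (aemeasurable_id.prodMk ((continuous_pathH p).aemeasurable.prodMk
      (Lp.aestronglyMeasurable p.2).aemeasurable))
    (by filter_upwards [ae_restrict_mem measurableSet_Icc] with t ht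
        exact ⟨trivial, hp t ht, trivial⟩)

theorem exists_bound_comp_pathH_zero
    (hΛ : ContinuousOn (fun z : ℝ × E n × E n => Λ z.1 z.2.1 z.2.2) (univ ×ˢ U ×ˢ univ))
    (hp : p ∈ actO U) :
    ∃ C, ∀ t ∈ Icc (0 : ℝ) 1, ‖Λ t (pathH p t) 0‖ ≤ C :=
  isCompact_Icc.exists_bound_of_continuousOn <|
    hΛ.comp (continuous_id.prodMk ((continuous_pathH p).prodMk continuous_const)).continuousOn
      fun t ht => ⟨trivial, hp t ht, trivial⟩

theorem memLp_comp_pathH (hU : IsOpen U)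
    (hΛ : ContinuousOn (fun z : ℝ × E n × E n => Λ z.1 z.2.1 z.2.2) (univ ×ˢ U ×ˢ univ))
    (hp : p ∈ actO U) {c : ℝ}
    (hgrowth : ∀ t ∈ Icc (0 : ℝ) 1, ∀ q ∈ U, ∀ v, ‖Λ t q v‖ ≤ ‖Λ t q 0‖ + c * ‖v‖) :
    MemLp (fun t => Λ t (pathH p t) (p.2 t)) 2 μ01 := by
  obtain ⟨C, hC⟩ := exists_bound_comp_pathH_zero hΛ hp
  refine .of_le ((memLp_const C).add ((Lp.memLp p.2).norm.const_mul c))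
    (aestronglyMeasurable_comp_pathH hU hΛ hp) ?_
  filter_upwards [ae_restrict_mem measurableSet_Icc] with t ht
  refine (hgrowth t ht _ (hp t ht) _).trans (le_trans ?_ (Real.le_norm_self _))
  simp only [Pi.add_apply]
  linarith [hC t ht]

theorem integrable_comp_pathH (hU : IsOpen U)
    (hΛ : ContinuousOn (fun z : ℝ × E n × E n => Λ z.1 z.2.1 z.2.2) (univ ×ˢ U ×ˢ univ))
    (hp : p ∈ actO U) {c : ℝ}
    (hgrowth : ∀ t ∈ Icc (0 : ℝ) 1, ∀ q ∈ U, ∀ v,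
      ‖Λ t q v‖ ≤ ‖Λ t q 0‖ + c * (1 + ‖v‖) * ‖v‖) :
    Integrable (fun t => Λ t (pathH p t) (p.2 t)) μ01 := by
  obtain ⟨C, hC⟩ := exists_bound_comp_pathH_zero hΛ hp
  have hw : MemLp p.2 2 μ01 := Lp.memLp p.2
  have hbound : Integrable (fun t => C + c * (1 + ‖p.2 t‖) * ‖p.2 t‖) μ01 := by
    refine ((integrable_const C).add (((hw.integrable one_le_two).norm.add
      (hw.integrable_norm_pow two_ne_zero)).const_mul c)).congr (.of_forall fun t => ?_)
    simp only [Pi.add_apply]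
    ring
  refine hbound.mono' (aestronglyMeasurable_comp_pathH hU hΛ hp) ?_
  filter_upwards [ae_restrict_mem measurableSet_Icc] with t ht
  linarith [hgrowth t ht _ (hp t ht) (p.2 t), hC t ht]

end Path

theorem du_bois_reymond_general
    {n : ℕ} (U : Set (E n)) (hU : IsOpen U)
    (L : ℝ → E n → E n → ℝ)
    (Lq Lv : ℝ → E n → E n → E n)
    (Lvv Lqv Lvq Lqq : ℝ → E n → E n → (E n →L[ℝ] E n))
    (hL : ContDiffOn ℝ ∞ (fun z : ℝ × E n × E n => L z.1 z.2.1 z.2.2)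
      (Set.univ ×ˢ U ×ˢ Set.univ))
    (hLq : ∀ (t : ℝ), ∀ q ∈ U, ∀ v : E n, HasGradientAt (fun q' => L t q' v) (Lq t q v) q)
    (hLv : ∀ (t : ℝ), ∀ q ∈ U, ∀ v : E n, HasGradientAt (fun v' => L t q v') (Lv t q v) v)
    (hLvv : ∀ (t : ℝ), ∀ q ∈ U, ∀ v : E n, HasFDerivAt (fun v' => Lv t q v') (Lvv t q v) v)
    (hLvq : ∀ (t : ℝ), ∀ q ∈ U, ∀ v : E n, HasFDerivAt (fun v' => Lq t q v') (Lvq t q v) v)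
    (ℓ₁ : ℝ) (hℓ₁ : 0 < ℓ₁)
    (hL1 : ∀ t ∈ Set.Icc (0:ℝ) 1, ∀ q ∈ U, ∀ v : E n,
      ‖Lvv t q v‖ ≤ ℓ₁ ∧ ‖Lqv t q v‖ ≤ ℓ₁ * (1 + ‖v‖) ∧ ‖Lvq t q v‖ ≤ ℓ₁ * (1 + ‖v‖)
        ∧ ‖Lqq t q v‖ ≤ ℓ₁ * (1 + ‖v‖ ^ 2))
    (p : Hsp n) (hp : p ∈ actO U)
    (hcrit : ∀ ξ : Hsp n, ξ.1 = 0 → pathH ξ 1 = 0 → dAct Lq Lv p ξ = 0) :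
    ∃ u : E n, ∀ᵐ t ∂μ01,
      Lv t (pathH p t) (p.2 t)
        = u + ∫ s in Set.Ioc (0:ℝ) t, Lq s (pathH p s) (p.2 s) ∂μ01 := by
  have hLC1 : ContDiffOn ℝ 1 (fun z : ℝ × E n × E n => L z.1 z.2.1 z.2.2) (univ ×ˢ U ×ˢ univ) :=
    hL.of_le (by exact_mod_cast le_top)
  have hf : MemLp (fun t => Lv t (pathH p t) (p.2 t)) 2 μ01 :=
    memLp_comp_pathH hU (continuousOn_of_hasGradientAt_velocity hU hLC1 hLv) hp
      fun t ht q hq _ => norm_le_norm_zero_add_of_norm_hasFDerivAt_le (hLvv t q hq)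
        fun x _ => (hL1 t ht q hq x).1
  have hg : Integrable (fun t => Lq t (pathH p t) (p.2 t)) μ01 :=
    integrable_comp_pathH hU (continuousOn_of_hasGradientAt_position hU hLC1 hLq) hp
      fun t ht q hq _ => norm_le_norm_zero_add_of_norm_hasFDerivAt_le (hLvq t q hq)
        fun x hx => (hL1 t ht q hq x).2.2.1.trans (by gcongr)
  obtain ⟨u, hu⟩ := exists_ae_eq_const_add_setIntegral_Iic hf hg fun z hz => by
    have h := hcrit (0, z) rfl (by rw [pathH_one, hz, add_zero])
    simpa only [dAct, pathH_eq_add_setIntegral_Iic, zero_add] using h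
  exact ⟨u, by simpa only [setIntegral_Ioc_eq_setIntegral_Iic μ01_Iic_zero] using hu⟩

/-- (Du Bois-Reymond.) If `DS_L(x,w)` vanishes on all variations vanishing at
both endpoints, then `∂L/∂v(t,γ(t),w(t)) = u + ∫_0^t ∂L/∂q(s,γ(s),w(s)) ds` a.e. -/
theorem du_bois_reymond
    {n : ℕ} (U : Set (E n)) (hU : IsOpen U)
    (L : ℝ → E n → E n → ℝ)
    (Lq Lv : ℝ → E n → E n → E n)
    (Lvv Lqv Lvq Lqq : ℝ → E n → E n → (E n →L[ℝ] E n))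
    (hL : ContDiffOn ℝ ∞ (fun z : ℝ × E n × E n => L z.1 z.2.1 z.2.2)
      (Set.univ ×ˢ U ×ˢ Set.univ))
    (hLq : ∀ (t : ℝ), ∀ q ∈ U, ∀ v : E n, HasGradientAt (fun q' => L t q' v) (Lq t q v) q)
    (hLv : ∀ (t : ℝ), ∀ q ∈ U, ∀ v : E n, HasGradientAt (fun v' => L t q v') (Lv t q v) v)
    (hLvv : ∀ (t : ℝ), ∀ q ∈ U, ∀ v : E n, HasFDerivAt (fun v' => Lv t q v') (Lvv t q v) v)
    (hLqv : ∀ (t : ℝ), ∀ q ∈ U, ∀ v : E n, HasFDerivAt (fun q' => Lv t q' v) (Lqv t q v) q)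
    (hLvq : ∀ (t : ℝ), ∀ q ∈ U, ∀ v : E n, HasFDerivAt (fun v' => Lq t q v') (Lvq t q v) v)
    (hLqq : ∀ (t : ℝ), ∀ q ∈ U, ∀ v : E n, HasFDerivAt (fun q' => Lq t q' v) (Lqq t q v) q)
    (ℓ₁ : ℝ) (hℓ₁ : 0 < ℓ₁)
    (hL1 : ∀ t ∈ Set.Icc (0:ℝ) 1, ∀ q ∈ U, ∀ v : E n,
      ‖Lvv t q v‖ ≤ ℓ₁ ∧ ‖Lqv t q v‖ ≤ ℓ₁ * (1 + ‖v‖) ∧ ‖Lvq t q v‖ ≤ ℓ₁ * (1 + ‖v‖)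
        ∧ ‖Lqq t q v‖ ≤ ℓ₁ * (1 + ‖v‖ ^ 2))
    (p : Hsp n) (hp : p ∈ actO U)
    (hcrit : ∀ ξ : Hsp n, ξ.1 = 0 → pathH ξ 1 = 0 → dAct Lq Lv p ξ = 0) :
    ∃ u : E n, ∀ᵐ t ∂μ01,
      Lv t (pathH p t) (p.2 t)
        = u + ∫ s in Set.Ioc (0:ℝ) t, Lq s (pathH p s) (p.2 s) ∂μ01 :=
  du_bois_reymond_general U hU L Lq Lv Lvv Lqv Lvq Lqq hL hLq hLv hLvv hLvq ℓ₁ hℓ₁ hL1 p hp hcrit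
end

section
/- Conversely, let γ : [0,1] → U be a C^∞ curve with (γ(0),γ(1)) ∈ W which solves the Euler–Lagrange equation d/dt ( ∂L/∂v(t,γ(t),γ'(t)) ) = ∂L/∂q(t,γ(t),γ'(t)) on [0,1] and satisfies ∂L/∂v(0,γ(0),γ'(0))·ξ₀ = ∂L/∂v(1,γ(1),γ'(1))·ξ₁ for all (ξ₀,ξ₁) ∈ W. Then the element (γ(0), γ') belongs to 𝒪 ∩ H_W and is a critical point of S_L^W, i.e. DS_L(γ(0),γ')[ξ] = 0 for every ξ ∈ H_W. -/
/-!
Write `A t = ∂L/∂q(t, γ t, γ' t)` and `B t = ∂L/∂v(t, γ t, γ' t)`: the Euler–Lagrange equation says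
`B' = A` on `[0,1]`, and `A` is continuous because `L` is `C¹`. The element `(γ 0, γ')` of `H` has
path `γ`. For `ξ = (x, w)`, whose path is `x + ∫₀ᵗ w`, Fubini on the triangle `{s ≤ t}` together
with the fundamental theorem of calculus for `B` integrates by parts:
`DS_L(γ)[ξ] = ∫ ⟪A, ξ⟫ + ⟪B, w⟫ = ⟪B 1, ξ 1⟫ - ⟪B 0, ξ 0⟫`, and the natural boundary condition
makes this vanish on `H_W`.
-/

open MeasureTheory Set Filter Topology ContDiff
open scoped RealInnerProductSpace

section InnerIntegration

variable {F : Type*} [NormedAddCommGroup F] [InnerProductSpace ℝ F]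

theorem MeasureTheory.IntegrableOn.continuousOn_inner {μ : Measure ℝ} {K : Set ℝ}
    (hK : IsCompact K) {B w : ℝ → F} (hB : ContinuousOn B K) (hw : IntegrableOn w K μ) :
    IntegrableOn (fun t => ⟪B t, w t⟫) K μ := by
  obtain ⟨C, hC⟩ := hK.exists_bound_of_continuousOn hB
  refine (hw.norm.const_mul C).mono' ((hB.aestronglyMeasurable hK.measurableSet).inner hw.1) ?_
  filter_upwards [ae_restrict_mem hK.measurableSet] with t ht
  calc ‖⟪B t, w t⟫‖ ≤ ‖B t‖ * ‖w t‖ := norm_inner_le_norm _ _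
    _ ≤ C * ‖w t‖ := by gcongr; exact hC t ht

variable [CompleteSpace F]

theorem integral_eq_sub_of_hasDerivWithinAt_Icc {a b : ℝ} (hab : a ≤ b) {A B : ℝ → F}
    (hB : ∀ t ∈ Icc a b, HasDerivWithinAt B (A t) (Icc a b) t) (hA : IntegrableOn A (Icc a b)) :
    ∫ t in a..b, A t = B b - B a :=
  intervalIntegral.integral_eq_sub_of_hasDerivAt_of_le hab
    (fun t ht => (hB t ht).continuousWithinAt)
    (fun t ht => (hB t (Ioo_subset_Icc_self ht)).hasDerivAt (Icc_mem_nhds ht.1 ht.2))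
    ((intervalIntegrable_iff_integrableOn_Icc_of_le hab).2 hA)

theorem intervalIntegral_inner_primitive_swap {a b : ℝ} (hab : a ≤ b) {A w : ℝ → F}
    (hA : IntegrableOn A (Ioc a b)) (hw : IntegrableOn w (Ioc a b)) :
    ∫ t in a..b, ⟪A t, ∫ s in a..t, w s⟫ = ∫ s in a..b, ⟪∫ t in s..b, A t, w s⟫ := by
  set μ := volume.restrict (Ioc a b)
  set T : ℝ × ℝ → ℝ := {z : ℝ × ℝ | z.2 ≤ z.1}.indicator fun z => ⟪A z.1, w z.2⟫
  have hT : Integrable T (μ.prod μ) := by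
    refine Integrable.indicator ?_ (measurableSet_le measurable_snd measurable_fst)
    refine (hA.norm.mul_prod hw.norm).mono' (hA.1.comp_fst.inner hw.1.comp_snd) ?_
    exact ae_of_all _ fun z => norm_inner_le_norm _ _
  have slice_fst : ∀ t ∈ Ioc a b, ∫ s, T (t, s) ∂μ = ⟪A t, ∫ s in a..t, w s⟫ := by
    intro t ht
    calc ∫ s, T (t, s) ∂μ = ∫ s in Iic t, ⟪A t, w s⟫ ∂μ := integral_indicator measurableSet_Iic
      _ = ⟪A t, ∫ s in Ioc a t, w s⟫ := by
        rw [Measure.restrict_restrict measurableSet_Iic, Iic_inter_Ioc_of_le ht.2,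
          integral_inner (hw.mono_set (Ioc_subset_Ioc_right ht.2))]
      _ = ⟪A t, ∫ s in a..t, w s⟫ := by rw [intervalIntegral.integral_of_le ht.1.le]
  have slice_snd : ∀ s ∈ Ioc a b, ∫ t, T (t, s) ∂μ = ⟪∫ t in s..b, A t, w s⟫ := by
    intro s hs
    have hset : Ici s ∩ Ioc a b = Icc s b := by
      ext t; simp only [mem_inter_iff, mem_Ici, mem_Ioc, mem_Icc]
      exact ⟨fun h => ⟨h.1, h.2.2⟩, fun h => ⟨h.1, hs.1.trans_le h.1, h.2⟩⟩
    calc ∫ t, T (t, s) ∂μ = ∫ t in Ici s, ⟪A t, w s⟫ ∂μ := integral_indicator measurableSet_Ici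
      _ = ∫ t in Ioc s b, ⟪w s, A t⟫ := by
        rw [Measure.restrict_restrict measurableSet_Ici, hset, integral_Icc_eq_integral_Ioc]
        exact integral_congr_ae (ae_of_all _ fun t => real_inner_comm _ _)
      _ = ⟪∫ t in s..b, A t, w s⟫ := by
        rw [integral_inner (hA.mono_set (Ioc_subset_Ioc_left hs.1.le)), real_inner_comm,
          intervalIntegral.integral_of_le hs.2]
  calc ∫ t in a..b, ⟪A t, ∫ s in a..t, w s⟫ = ∫ t, ∫ s, T (t, s) ∂μ ∂μ := by
        rw [intervalIntegral.integral_of_le hab]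
        exact setIntegral_congr_fun measurableSet_Ioc fun t ht => (slice_fst t ht).symm
    _ = ∫ s, ∫ t, T (t, s) ∂μ ∂μ := integral_integral_swap hT
    _ = ∫ s in a..b, ⟪∫ t in s..b, A t, w s⟫ := by
        rw [intervalIntegral.integral_of_le hab]
        exact setIntegral_congr_fun measurableSet_Ioc slice_snd

theorem intervalIntegral_inner_primitive_eq_of_hasDerivWithinAt {a b : ℝ} (hab : a ≤ b)
    {A B w : ℝ → F} (hA : IntegrableOn A (Icc a b))
    (hB : ∀ t ∈ Icc a b, HasDerivWithinAt B (A t) (Icc a b) t) (hw : IntegrableOn w (Icc a b)) :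
    ∫ t in a..b, ⟪A t, ∫ s in a..t, w s⟫ = ∫ s in a..b, ⟪B b - B s, w s⟫ := by
  rw [intervalIntegral_inner_primitive_swap hab (hA.mono_set Ioc_subset_Icc_self)
    (hw.mono_set Ioc_subset_Icc_self)]
  refine intervalIntegral.integral_congr fun s hs => ?_
  rw [uIcc_of_le hab] at hs
  rw [integral_eq_sub_of_hasDerivWithinAt_Icc hs.2
    (fun t ht => (hB t ⟨hs.1.trans ht.1, ht.2⟩).mono (Icc_subset_Icc_left hs.1))
    (hA.mono_set (Icc_subset_Icc_left hs.1))]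

theorem intervalIntegral_inner_primitive_add_inner_eq {a b : ℝ} (hab : a ≤ b) {A B w : ℝ → F}
    (x : F) (hA : IntegrableOn A (Icc a b))
    (hB : ∀ t ∈ Icc a b, HasDerivWithinAt B (A t) (Icc a b) t) (hw : IntegrableOn w (Icc a b)) :
    ∫ t in a..b, (⟪A t, x + ∫ s in a..t, w s⟫ + ⟪B t, w t⟫)
      = ⟪B b, x + ∫ s in a..b, w s⟫ - ⟪B a, x⟫ := by
  have hBcont : ContinuousOn B (Icc a b) := fun t ht => (hB t ht).continuousWithinAt
  have hW : ContinuousOn (fun t => ∫ s in a..t, w s) (Icc a b) := by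
    simpa only [uIcc_of_le hab] using intervalIntegral.continuousOn_primitive_interval
      (μ := volume) (hw.mono_set (uIcc_of_le hab).subset)
  have iAx : IntervalIntegrable (fun t => ⟪A t, x⟫) volume a b :=
    (intervalIntegrable_iff_integrableOn_Icc_of_le hab).2 (hA.inner_const x)
  have iAW : IntervalIntegrable (fun t => ⟪A t, ∫ s in a..t, w s⟫) volume a b := by
    refine (intervalIntegrable_iff_integrableOn_Icc_of_le hab).2 ?_
    simpa only [real_inner_comm] using hA.continuousOn_inner isCompact_Icc hW
  have iBw : IntervalIntegrable (fun t => ⟪B t, w t⟫) volume a b :=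
    (intervalIntegrable_iff_integrableOn_Icc_of_le hab).2
      (hw.continuousOn_inner isCompact_Icc hBcont)
  have iBbw : IntervalIntegrable (fun t => ⟪B b, w t⟫) volume a b :=
    (intervalIntegrable_iff_integrableOn_Icc_of_le hab).2 (hw.const_inner _)
  have hAx : ∫ t in a..b, ⟪A t, x⟫ = ⟪B b - B a, x⟫ := by
    rw [← integral_eq_sub_of_hasDerivWithinAt_Icc hab hB hA, real_inner_comm,
      intervalIntegral.integral_of_le hab, intervalIntegral.integral_of_le hab,
      ← integral_inner (hA.mono_set Ioc_subset_Icc_self)]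
    exact integral_congr_ae (ae_of_all _ fun t => real_inner_comm _ _)
  have hBbw : ∫ s in a..b, ⟪B b, w s⟫ = ⟪B b, ∫ s in a..b, w s⟫ := by
    rw [intervalIntegral.integral_of_le hab, intervalIntegral.integral_of_le hab,
      integral_inner (hw.mono_set Ioc_subset_Icc_self)]
  calc ∫ t in a..b, (⟪A t, x + ∫ s in a..t, w s⟫ + ⟪B t, w t⟫)
      = (∫ t in a..b, ⟪A t, x⟫) + (∫ t in a..b, ⟪A t, ∫ s in a..t, w s⟫)
          + ∫ t in a..b, ⟪B t, w t⟫ := by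
        simp only [inner_add_right]
        rw [intervalIntegral.integral_add (iAx.add iAW) iBw, intervalIntegral.integral_add iAx iAW]
    _ = ⟪B b - B a, x⟫ + ((∫ s in a..b, ⟪B b, w s⟫) - ∫ s in a..b, ⟪B s, w s⟫)
          + ∫ t in a..b, ⟪B t, w t⟫ := by
        simp only [hAx, intervalIntegral_inner_primitive_eq_of_hasDerivWithinAt hab hA hB hw,
          inner_sub_left, intervalIntegral.integral_sub iBbw iBw]
    _ = ⟪B b, x + ∫ s in a..b, w s⟫ - ⟪B a, x⟫ := by
        rw [hBbw, inner_sub_left, inner_add_right]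
        ring

end InnerIntegration

theorem continuousOn_partialGradient {T F V : Type*} [NormedAddCommGroup T] [NormedSpace ℝ T]
    [NormedAddCommGroup F] [InnerProductSpace ℝ F] [CompleteSpace F]
    [NormedAddCommGroup V] [NormedSpace ℝ V] {U : Set F} (hU : IsOpen U)
    {L : T → F → V → ℝ} {Lq : T → F → V → F}
    (hL : ContDiffOn ℝ 1 (fun z : T × F × V => L z.1 z.2.1 z.2.2) (univ ×ˢ U ×ˢ univ))
    (hLq : ∀ t, ∀ q ∈ U, ∀ v, HasGradientAt (fun q' => L t q' v) (Lq t q v) q) :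
    ContinuousOn (fun z : T × F × V => Lq z.1 z.2.1 z.2.2) (univ ×ˢ U ×ˢ univ) := by
  set f : T × F × V → ℝ := fun z => L z.1 z.2.1 z.2.2
  set Ω : Set (T × F × V) := univ ×ˢ U ×ˢ univ
  have hΩ : IsOpen Ω := isOpen_univ.prod (hU.prod isOpen_univ)
  set ι : F →L[ℝ] T × F × V := (0 : F →L[ℝ] T).prod ((ContinuousLinearMap.id ℝ F).prod 0)
  have hLq_eq : ∀ z ∈ Ω,
      Lq z.1 z.2.1 z.2.2 = (InnerProductSpace.toDual ℝ F).symm ((fderiv ℝ f z).comp ι) := by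
    rintro ⟨t, q, v⟩ hz
    have hι : HasFDerivAt (fun q' : F => ((t, q', v) : T × F × V)) ι q :=
      (hasFDerivAt_const t q).prodMk ((hasFDerivAt_id q).prodMk (hasFDerivAt_const v q))
    have hf : HasFDerivAt (fun q' => L t q' v) ((fderiv ℝ f (t, q, v)).comp ι) q :=
      ((hL.differentiableOn one_ne_zero _ hz).differentiableAt
        (hΩ.mem_nhds hz)).hasFDerivAt.comp (g := f) q hι
    rw [← (hasGradientAt_iff_hasFDerivAt.1 (hLq t q hz.2.1 v)).unique hf,
      LinearIsometryEquiv.symm_apply_apply]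
  refine ContinuousOn.congr ?_ hLq_eq
  exact (InnerProductSpace.toDual ℝ F).symm.continuous.comp_continuousOn
    ((hL.continuousOn_fderiv_of_isOpen hΩ le_rfl).clm_comp continuousOn_const)

variable {n : ℕ}

theorem pathH_eq_add_intervalIntegral (ξ : Hsp n) {t : ℝ} (ht : t ∈ Icc (0:ℝ) 1) :
    pathH ξ t = ξ.1 + ∫ s in 0..t, ξ.2 s := by
  rw [pathH, Measure.restrict_restrict measurableSet_Ioc,
    inter_eq_left.2 (Ioc_subset_Icc_self.trans (Icc_subset_Icc_right ht.2)),
    intervalIntegral.integral_of_le ht.1]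

theorem integral_inner_pathH_add_inner_eq (ξ : Hsp n) {A B : ℝ → E n}
    (hA : IntegrableOn A (Icc 0 1))
    (hB : ∀ t ∈ Icc (0:ℝ) 1, HasDerivWithinAt B (A t) (Icc 0 1) t) :
    ∫ t, (⟪A t, pathH ξ t⟫ + ⟪B t, ξ.2 t⟫) ∂μ01 = ⟪B 1, pathH ξ 1⟫ - ⟪B 0, pathH ξ 0⟫ := by
  have hξ : IntegrableOn (ξ.2 : ℝ → E n) (Icc 0 1) := (Lp.memLp ξ.2).integrable one_le_two
  have h0 : pathH ξ 0 = ξ.1 := by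
    simp [pathH_eq_add_intervalIntegral ξ (left_mem_Icc.2 zero_le_one)]
  rw [setIntegral_congr_fun measurableSet_Icc fun t ht => by
      rw [pathH_eq_add_intervalIntegral ξ ht],
    integral_Icc_eq_integral_Ioc, ← intervalIntegral.integral_of_le zero_le_one,
    intervalIntegral_inner_primitive_add_inner_eq zero_le_one ξ.1 hA hB hξ, h0,
    pathH_eq_add_intervalIntegral ξ (right_mem_Icc.2 zero_le_one)]

theorem pathH_eq_of_ae_eq_deriv {g : ℝ → E n} (hg : ContDiff ℝ 1 g) {p : Hsp n}
    (hp₁ : p.1 = g 0) (hp₂ : (p.2 : ℝ → E n) =ᵐ[μ01] deriv g) {t : ℝ}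
    (ht : t ∈ Icc (0:ℝ) 1) : pathH p t = g t := by
  have hint : ∫ s in 0..t, p.2 s = ∫ s in 0..t, deriv g s := by
    refine intervalIntegral.integral_congr_ae ?_
    filter_upwards [(ae_restrict_iff' measurableSet_Icc).1 hp₂] with s hs hs'
    rw [uIoc_of_le ht.1] at hs'
    exact hs ⟨hs'.1.le, hs'.2.trans ht.2⟩
  rw [pathH_eq_add_intervalIntegral p ht, hint,
    intervalIntegral.integral_deriv_eq_sub
      (fun s _ => (hg.differentiable one_ne_zero).differentiableAt)
      ((hg.continuous_deriv le_rfl).intervalIntegrable 0 t), hp₁, add_sub_cancel]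

theorem smooth_solution_is_critical_point_general
    {n : ℕ} (U : Set (E n)) (hU : IsOpen U)
    (L : ℝ → E n → E n → ℝ)
    (Lq Lv : ℝ → E n → E n → E n)
    (hL : ContDiffOn ℝ ∞ (fun z : ℝ × E n × E n => L z.1 z.2.1 z.2.2)
      (Set.univ ×ˢ U ×ˢ Set.univ))
    (hLq : ∀ (t : ℝ), ∀ q ∈ U, ∀ v : E n, HasGradientAt (fun q' => L t q' v) (Lq t q v) q)
    (W : Submodule ℝ (E n × E n)) (g : ℝ → E n) (hg : ContDiff ℝ ∞ g)
    (hgU : ∀ t ∈ Set.Icc (0:ℝ) 1, g t ∈ U)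
    (hgW : (g 0, g 1) ∈ W)
    (hEL : ∀ t ∈ Set.Icc (0:ℝ) 1,
      HasDerivWithinAt (fun s => Lv s (g s) (deriv g s)) (Lq t (g t) (deriv g t))
        (Set.Icc (0:ℝ) 1) t)
    (hbd : ∀ ξ₀ ξ₁ : E n, (ξ₀, ξ₁) ∈ W →
      ⟪Lv 0 (g 0) (deriv g 0), ξ₀⟫ = ⟪Lv 1 (g 1) (deriv g 1), ξ₁⟫) :
    ∃ p : Hsp n, p.1 = g 0 ∧ ((p.2 : ℝ → E n) =ᵐ[μ01] fun t => deriv g t) ∧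
      (∀ t ∈ Set.Icc (0:ℝ) 1, pathH p t = g t) ∧
      p ∈ actO U ∧ p ∈ HWsub W ∧
      ∀ ξ : Hsp n, ξ ∈ HWsub W → dAct Lq Lv p ξ = 0 := by
  have hg₁ : ContDiff ℝ 1 g := hg.of_le (by exact_mod_cast le_top)
  have hg' : Continuous (deriv g) := hg₁.continuous_deriv le_rfl
  obtain ⟨C, hC⟩ := isCompact_Icc.exists_bound_of_continuousOn (hg'.continuousOn (s := Icc 0 1))
  have hmem : MemLp (deriv g) 2 μ01 :=
    MemLp.of_bound hg'.aestronglyMeasurable C (ae_restrict_of_forall_mem measurableSet_Icc hC)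
  set p : Hsp n := (g 0, hmem.toLp (deriv g))
  have hpath : ∀ t ∈ Icc (0:ℝ) 1, pathH p t = g t := fun t ht =>
    pathH_eq_of_ae_eq_deriv hg₁ rfl hmem.coeFn_toLp ht
  have hp0 : pathH p 0 = g 0 := hpath 0 (left_mem_Icc.2 zero_le_one)
  have hp1 : pathH p 1 = g 1 := hpath 1 (right_mem_Icc.2 zero_le_one)
  refine ⟨p, rfl, hmem.coeFn_toLp, hpath, fun t ht => hpath t ht ▸ hgU t ht,
    show (pathH p 0, pathH p 1) ∈ W by rwa [hp0, hp1], fun ξ hξ => ?_⟩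
  have hA : ContinuousOn (fun t => Lq t (g t) (deriv g t)) (Icc 0 1) :=
    (continuousOn_partialGradient hU (hL.of_le (by exact_mod_cast le_top)) hLq).comp
      (continuous_id.prodMk (hg₁.continuous.prodMk hg')).continuousOn
      fun t ht => ⟨mem_univ t, hgU t ht, mem_univ _⟩
  calc dAct Lq Lv p ξ
      = ∫ t, (⟪Lq t (g t) (deriv g t), pathH ξ t⟫ + ⟪Lv t (g t) (deriv g t), ξ.2 t⟫) ∂μ01 := by
        refine integral_congr_ae ?_
        filter_upwards [hmem.coeFn_toLp, ae_restrict_mem measurableSet_Icc] with t hpt ht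
        rw [hpt, hpath t ht]
    _ = ⟪Lv 1 (g 1) (deriv g 1), pathH ξ 1⟫ - ⟪Lv 0 (g 0) (deriv g 0), pathH ξ 0⟫ :=
        integral_inner_pathH_add_inner_eq ξ hA.integrableOn_Icc hEL
    _ = 0 := sub_eq_zero.2 (hbd _ _ hξ).symm

/-- A smooth solution of the Euler–Lagrange equation with the natural boundary
condition determined by `W` gives a critical point `(γ(0),γ')` of `S_L^W`. -/
theorem smooth_solution_is_critical_point
    {n : ℕ} (U : Set (E n)) (hU : IsOpen U)
    (L : ℝ → E n → E n → ℝ)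
    (Lq Lv : ℝ → E n → E n → E n)
    (Lvv Lqv Lvq Lqq : ℝ → E n → E n → (E n →L[ℝ] E n))
    (hL : ContDiffOn ℝ ∞ (fun z : ℝ × E n × E n => L z.1 z.2.1 z.2.2)
      (Set.univ ×ˢ U ×ˢ Set.univ))
    (hLq : ∀ (t : ℝ), ∀ q ∈ U, ∀ v : E n, HasGradientAt (fun q' => L t q' v) (Lq t q v) q)
    (hLv : ∀ (t : ℝ), ∀ q ∈ U, ∀ v : E n, HasGradientAt (fun v' => L t q v') (Lv t q v) v)
    (hLvv : ∀ (t : ℝ), ∀ q ∈ U, ∀ v : E n, HasFDerivAt (fun v' => Lv t q v') (Lvv t q v) v)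
    (hLqv : ∀ (t : ℝ), ∀ q ∈ U, ∀ v : E n, HasFDerivAt (fun q' => Lv t q' v) (Lqv t q v) q)
    (hLvq : ∀ (t : ℝ), ∀ q ∈ U, ∀ v : E n, HasFDerivAt (fun v' => Lq t q v') (Lvq t q v) v)
    (hLqq : ∀ (t : ℝ), ∀ q ∈ U, ∀ v : E n, HasFDerivAt (fun q' => Lq t q' v) (Lqq t q v) q)
    (ℓ₁ : ℝ) (hℓ₁ : 0 < ℓ₁)
    (hL1 : ∀ t ∈ Set.Icc (0:ℝ) 1, ∀ q ∈ U, ∀ v : E n,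
      ‖Lvv t q v‖ ≤ ℓ₁ ∧ ‖Lqv t q v‖ ≤ ℓ₁ * (1 + ‖v‖) ∧ ‖Lvq t q v‖ ≤ ℓ₁ * (1 + ‖v‖)
        ∧ ‖Lqq t q v‖ ≤ ℓ₁ * (1 + ‖v‖ ^ 2))
    (W : Submodule ℝ (E n × E n)) (g : ℝ → E n) (hg : ContDiff ℝ ∞ g)
    (hgU : ∀ t ∈ Set.Icc (0:ℝ) 1, g t ∈ U)
    (hgW : (g 0, g 1) ∈ W)
    (hEL : ∀ t ∈ Set.Icc (0:ℝ) 1,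
      HasDerivWithinAt (fun s => Lv s (g s) (deriv g s)) (Lq t (g t) (deriv g t))
        (Set.Icc (0:ℝ) 1) t)
    (hbd : ∀ ξ₀ ξ₁ : E n, (ξ₀, ξ₁) ∈ W →
      ⟪Lv 0 (g 0) (deriv g 0), ξ₀⟫ = ⟪Lv 1 (g 1) (deriv g 1), ξ₁⟫) :
    ∃ p : Hsp n, p.1 = g 0 ∧ ((p.2 : ℝ → E n) =ᵐ[μ01] fun t => deriv g t) ∧
      (∀ t ∈ Set.Icc (0:ℝ) 1, pathH p t = g t) ∧
      p ∈ actO U ∧ p ∈ HWsub W ∧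
      ∀ ξ : Hsp n, ξ ∈ HWsub W → dAct Lq Lv p ξ = 0 :=
  smooth_solution_is_critical_point_general U hU L Lq Lv hL hLq W g hg hgU hgW hEL hbd
end
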